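/- arXiv:2303.01182 — 11 statements merged into one kernel-verified Lean document; each statement's English description precedes it below -/
import Mathlib

section
/- Let V be an F-space (a topological vector space whose topology is induced by a complete translation-invariant metric), let α be an infinite cardinal, and let A, B ⊆ V with A ∩ B = ∅ and A + B ⊆ A. Suppose A is α-lineable (A ∪ {0} contains an α-dimensional linear subspace) and B is 1-lineable. Then there exists an α-dimensional subspace M with M \ {0} ⊆ A whose closure is not contained in A ∪ {0}; in particular, A is not (α, β)-spaceable for any cardinal β. -/
/-!
Take an `α`-dimensional `W ⊆ A ∪ {0}` and `b ≠ 0` spanning a line in `B ∪ {0}`; as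
`A ∩ B = ∅`, `b ∉ W`. Choose a linear functional `f` on `W` which is `1` on a sequence
`x n → 0` of `W` (rescale countably many basis vectors to tend to `0`). The map
`w ↦ w + f w • b` is injective, so its range `M` is `α`-dimensional; each of its nonzero
vectors is a vector of `A` plus a vector of `B ∪ {0}`, hence lies in `A`; and
`x n + b → b ∉ A ∪ {0}`, so `b` lies in the closure of `M`.
-/

open scoped Pointwise

/-- `A` is `(α, β)`-spaceable in `V`: `A` is `α`-lineable and every `α`-dimensional
subspace contained in `A ∪ {0}` extends to a closed `β`-dimensional subspace
contained in `A ∪ {0}`. -/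
def IsABSpaceable (K V : Type*) [Field K] [AddCommGroup V] [Module K V]
    [TopologicalSpace V] (A : Set V) (α β : Cardinal) : Prop :=
  (∃ W : Submodule K V, Module.rank K W = α ∧ (W : Set V) ⊆ A ∪ {0}) ∧
  ∀ W : Submodule K V, Module.rank K W = α → (W : Set V) ⊆ A ∪ {0} →
    ∃ Z : Submodule K V, IsClosed (Z : Set V) ∧ Module.rank K Z = β ∧
      W ≤ Z ∧ (Z : Set V) ⊆ A ∪ {0}

open Filter Topology

section SmallMultiples

variable {𝕜 E : Type*} [NontriviallyNormedField 𝕜] [AddCommGroup E] [Module 𝕜 E]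
  [TopologicalSpace E] [FirstCountableTopology E] [ContinuousSMul 𝕜 E]

theorem exists_ne_zero_smul_tendsto_zero (x : ℕ → E) :
    ∃ t : ℕ → 𝕜, (∀ n, t n ≠ 0) ∧ Tendsto (fun n => t n • x n) atTop (𝓝 0) := by
  obtain ⟨U, hU⟩ := (𝓝 (0 : E)).exists_antitone_basis
  have hsmall : ∀ n, ∃ t : 𝕜, t ≠ 0 ∧ t • x n ∈ U n := fun n => by
    have hcont : Tendsto (fun t : 𝕜 => t • x n) (𝓝 0) (𝓝 0) := by
      simpa using (tendsto_id (x := 𝓝 (0 : 𝕜))).smul_const (x n)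
    have hev : ∀ᶠ t in 𝓝[≠] (0 : 𝕜), t • x n ∈ U n :=
      nhdsWithin_le_nhds (hcont (hU.mem n))
    obtain ⟨t, ht, ht0⟩ := (hev.and self_mem_nhdsWithin).exists
    exact ⟨t, ht0, ht⟩
  choose t ht0 ht using hsmall
  exact ⟨t, ht0, hU.tendsto ht⟩

theorem exists_linearMap_eq_one_on_seq_tendsto_zero (hE : Cardinal.aleph0 ≤ Module.rank 𝕜 E) :
    ∃ (f : E →ₗ[𝕜] 𝕜) (x : ℕ → E), (∀ n, f (x n) = 1) ∧ Tendsto x atTop (𝓝 0) := by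
  let v := Module.Basis.ofVectorSpace 𝕜 E
  have : Infinite (Module.Basis.ofVectorSpaceIndex 𝕜 E) := by
    rwa [Cardinal.infinite_iff, v.mk_eq_rank'']
  let e := Infinite.natEmbedding (Module.Basis.ofVectorSpaceIndex 𝕜 E)
  obtain ⟨t, ht0, ht⟩ := exists_ne_zero_smul_tendsto_zero (𝕜 := 𝕜) (fun n => v (e n))
  refine ⟨v.constr 𝕜 (Function.extend e (fun n => (t n)⁻¹) 0), fun n => t n • v (e n),
    fun n => ?_, ht⟩
  rw [map_smul, v.constr_basis, e.injective.extend_apply, smul_eq_mul, mul_inv_cancel₀ (ht0 n)]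

end SmallMultiples

namespace Submodule

variable {K V : Type*} [Field K] [AddCommGroup V] [Module K V]

def shear (W : Submodule K V) (b : V) (f : W →ₗ[K] K) : W →ₗ[K] V :=
  W.subtype + (LinearMap.toSpanSingleton K V b).comp f

variable {W : Submodule K V} {b : V} {f : W →ₗ[K] K}

@[simp]
theorem shear_apply (w : W) : W.shear b f w = w + f w • b := rfl

theorem shear_injective (hb : b ∉ W) : Function.Injective (W.shear b f) := by
  refine (injective_iff_map_eq_zero _).mpr fun w hw => ?_
  rw [shear_apply] at hw
  have hfw : f w = 0 := by
    by_contra hfw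
    refine hb ((W.smul_mem_iff hfw).mp ?_)
    rw [eq_neg_of_add_eq_zero_right hw]
    exact W.neg_mem w.2
  rw [hfw, zero_smul, add_zero] at hw
  exact Subtype.ext hw

theorem range_shear_diff_zero_subset {A B : Set V} (hstr : A + B ⊆ A)
    (hWA : (W : Set V) ⊆ A ∪ {0}) (hbB : ∀ t : K, t ≠ 0 → t • b ∈ B) :
    (LinearMap.range (W.shear b f) : Set V) \ {0} ⊆ A := by
  rintro _ ⟨⟨w, rfl⟩, hw0⟩
  have hwA : (w : V) ∈ A := by
    refine (hWA w.2).resolve_right fun h => hw0 ?_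
    rw [show w = 0 from Subtype.ext h, map_zero]
    rfl
  by_cases hfw : f w = 0
  · simpa [hfw] using hwA
  · exact hstr (Set.add_mem_add hwA (hbB _ hfw))

theorem mem_closure_range_shear [TopologicalSpace V] [ContinuousAdd V] {x : ℕ → W}
    (hfx : ∀ n, f (x n) = 1) (hx : Tendsto (fun n => (x n : V)) atTop (𝓝 0)) :
    b ∈ closure (LinearMap.range (W.shear b f) : Set V) := by
  have hlim : Tendsto (fun n => W.shear b f (x n)) atTop (𝓝 b) := by
    simpa [hfx] using hx.add_const b
  exact mem_closure_of_tendsto hlim (Eventually.of_forall fun n => ⟨x n, rfl⟩)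

end Submodule

theorem not_isABSpaceable_of_not_closure_subset {K V : Type*} [Field K] [AddCommGroup V]
    [Module K V] [TopologicalSpace V] {A : Set V} {α : Cardinal} (β : Cardinal)
    (M : Submodule K V) (hM : Module.rank K M = α) (hMA : (M : Set V) \ {0} ⊆ A)
    (hcl : ¬ closure (M : Set V) ⊆ A ∪ {0}) : ¬ IsABSpaceable K V A α β := by
  rintro ⟨-, hext⟩
  obtain ⟨Z, hZ, -, hMZ, hZA⟩ := hext M hM (Set.sdiff_subset_iff.mp hMA |>.trans (by simp))
  exact hcl ((closure_minimal hMZ hZ).trans hZA)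

theorem stmt0_general (V : Type*) [AddCommGroup V] [Module ℝ V] [MetricSpace V]
    [ContinuousAdd V] [ContinuousSMul ℝ V]
    (α : Cardinal) (hα : Cardinal.aleph0 ≤ α)
    (A B : Set V) (hAB : A ∩ B = ∅) (hstr : A + B ⊆ A)
    (hAlin : ∃ W : Submodule ℝ V, Module.rank ℝ W = α ∧ (W : Set V) ⊆ A ∪ {0})
    (hBlin : ∃ W : Submodule ℝ V, Module.rank ℝ W = 1 ∧ (W : Set V) ⊆ B ∪ {0}) :
    (∃ M : Submodule ℝ V, Module.rank ℝ M = α ∧ (M : Set V) \ {0} ⊆ A ∧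
      ¬ closure (M : Set V) ⊆ A ∪ {0}) ∧
    ∀ β : Cardinal, ¬ IsABSpaceable ℝ V A α β := by
  obtain ⟨W, hWrank, hWA⟩ := hAlin
  obtain ⟨L, hLrank, hLB⟩ := hBlin
  obtain ⟨b, hbL, hb0⟩ :=
    Submodule.exists_mem_ne_zero_of_ne_bot (Submodule.rank_eq_zero.not.mp (hLrank ▸ one_ne_zero))
  have hbB : ∀ t : ℝ, t ≠ 0 → t • b ∈ B := fun t ht =>
    (hLB (L.smul_mem t hbL)).resolve_right (smul_ne_zero ht hb0)
  have hb_notMem : b ∉ A ∪ {0} := by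
    rintro (hbA | rfl)
    · exact Set.eq_empty_iff_forall_notMem.mp hAB b ⟨hbA, by simpa using hbB 1 one_ne_zero⟩
    · exact hb0 rfl
  obtain ⟨f, x, hfx, hx⟩ := exists_linearMap_eq_one_on_seq_tendsto_zero (E := W) (hWrank ▸ hα)
  let M := LinearMap.range (W.shear b f)
  have hMrank : Module.rank ℝ M = α := by
    rw [rank_range_of_injective _ (Submodule.shear_injective fun hbW => hb_notMem (hWA hbW)), hWrank]
  have hMA : (M : Set V) \ {0} ⊆ A := Submodule.range_shear_diff_zero_subset hstr hWA hbB
  have hcl : ¬ closure (M : Set V) ⊆ A ∪ {0} := fun h =>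
    hb_notMem (h (Submodule.mem_closure_range_shear hfx ((continuous_subtype_val.tendsto 0).comp hx)))
  exact ⟨⟨M, hMrank, hMA, hcl⟩, fun β => not_isABSpaceable_of_not_closure_subset β M hMrank hMA hcl⟩

/-- in an F-space, if `A` is `α`-lineable (`α` infinite), `B` is
`1`-lineable, `A ∩ B = ∅` and `A + B ⊆ A`, then some `α`-dimensional subspace `M`
with `M \ {0} ⊆ A` has closure not contained in `A ∪ {0}`; in particular `A` is
not `(α, β)`-spaceable for any `β`. -/
theorem stmt0 (V : Type*) [AddCommGroup V] [Module ℝ V] [MetricSpace V]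
    [CompleteSpace V] [ContinuousAdd V] [ContinuousSMul ℝ V]
    (hinv : ∀ x y z : V, dist (x + z) (y + z) = dist x y)
    (α : Cardinal) (hα : Cardinal.aleph0 ≤ α)
    (A B : Set V) (hAB : A ∩ B = ∅) (hstr : A + B ⊆ A)
    (hAlin : ∃ W : Submodule ℝ V, Module.rank ℝ W = α ∧ (W : Set V) ⊆ A ∪ {0})
    (hBlin : ∃ W : Submodule ℝ V, Module.rank ℝ W = 1 ∧ (W : Set V) ⊆ B ∪ {0}) :
    (∃ M : Submodule ℝ V, Module.rank ℝ M = α ∧ (M : Set V) \ {0} ⊆ A ∧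
      ¬ closure (M : Set V) ⊆ A ∪ {0}) ∧
    ∀ β : Cardinal, ¬ IsABSpaceable ℝ V A α β :=
  stmt0_general V α hα A B hAB hstr hAlin hBlin
end

section
/- Let X be a Banach space, Y a nontrivial proper linear subspace of X, and α an infinite cardinal. If X \ Y is α-lineable, then X \ Y is not (α, β)-spaceable for any cardinal β; i.e., there exists an α-dimensional subspace W with W \ {0} ⊆ X \ Y such that no closed subspace Z satisfies W ⊆ Z ⊆ (X \ Y) ∪ {0}. -/
/-!
Take `y ≠ 0` in `Y` and a basis `(w i)` of an `α`-dimensional subspace `W` meeting `Y` only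
in `0`. Modulo `Y` the vectors `g i = y + c i • w i` (with `c i ≠ 0`) are just rescaled `w i`,
so they are independent modulo `Y`: their span `W'` has dimension `α` and meets `Y` only in `0`.
Since `α` is infinite, the `c i` can be chosen so that countably many `c i • w i` tend to `0`;
then `y` lies in the closure of `W'`, so every closed subspace containing `W'` contains
`y ∈ Y \ {0}`.
-/

open Filter Topology

theorem Module.Basis.linearIndependent_mkQ_of_disjoint {K V ι : Type*} [Field K]
    [AddCommGroup V] [Module K V] {W Y : Submodule K V} (b : Module.Basis ι K W)
    (hWY : Disjoint W Y) : LinearIndependent K (Y.mkQ ∘ fun i => (b i : V)) := by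
  refine (b.linearIndependent.map' W.subtype W.ker_subtype).map ?_
  rw [Submodule.ker_mkQ]
  exact hWY.mono_left (Submodule.span_le.mpr (Set.range_subset_iff.mpr fun i => (b i).2))

theorem linearIndependent_mkQ_add_smul {K V ι : Type*} [Field K] [AddCommGroup V]
    [Module K V] {Y : Submodule K V} {v : ι → V} (hv : LinearIndependent K (Y.mkQ ∘ v))
    {y : V} (hy : y ∈ Y) {c : ι → K} (hc : ∀ i, c i ≠ 0) :
    LinearIndependent K (Y.mkQ ∘ fun i => y + c i • v i) := by
  have hrescale :
      (Y.mkQ ∘ fun i => y + c i • v i) =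
        (fun i => Units.mk0 (c i) (hc i)) • (Y.mkQ ∘ v) := by
    funext i
    simp [(Submodule.Quotient.mk_eq_zero Y).mpr hy, Units.smul_def]
  rw [hrescale]
  exact hv.units_smul _

theorem disjoint_span_of_linearIndependent_mkQ {K V ι : Type*} [Field K] [AddCommGroup V]
    [Module K V] {Y : Submodule K V} {v : ι → V} (hv : LinearIndependent K (Y.mkQ ∘ v)) :
    Disjoint (Submodule.span K (Set.range v)) Y := by
  simpa using Submodule.range_ker_disjoint hv

theorem exists_mem_closure_range_add_smul {X ι : Type*} [NormedAddCommGroup X]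
    [NormedSpace ℝ X] [Infinite ι] (y : X) (x : ι → X) :
    ∃ c : ι → ℝ, (∀ i, c i ≠ 0) ∧
      y ∈ closure (Set.range fun i => y + c i • x i) := by
  let f : ℕ ↪ ι := Infinite.natEmbedding ι
  let c : ι → ℝ := fun i => 1 / (Function.invFun f i + 1 : ℝ) / (‖x i‖ + 1)
  refine ⟨c, fun i => by positivity, mem_closure_of_tendsto (b := atTop)
    (f := fun n => y + c (f n) • x (f n)) ?_ (Eventually.of_forall fun n => ⟨f n, rfl⟩)⟩
  have hbound : ∀ n : ℕ, ‖c (f n) • x (f n)‖ ≤ 1 / (n + 1 : ℝ) := by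
    intro n
    have hcn : c (f n) = 1 / (n + 1 : ℝ) / (‖x (f n)‖ + 1) := by
      simp only [c, Function.leftInverse_invFun f.injective n]
    rw [norm_smul, hcn, Real.norm_of_nonneg (by positivity), div_mul_eq_mul_div,
      div_le_iff₀ (by positivity)]
    gcongr
    linarith
  have hsmall : Tendsto (fun n => c (f n) • x (f n)) atTop (𝓝 0) :=
    squeeze_zero_norm hbound tendsto_one_div_add_atTop_nhds_zero_nat
  simpa using tendsto_const_nhds.add hsmall

theorem stmt1_general (X : Type*) [NormedAddCommGroup X] [NormedSpace ℝ X]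
    (Y : Submodule ℝ X) (hY₁ : Y ≠ ⊥)
    (α : Cardinal) (hα : Cardinal.aleph0 ≤ α)
    (hlin : ∃ W : Submodule ℝ X, Module.rank ℝ W = α ∧
      (W : Set X) ⊆ (Y : Set X)ᶜ ∪ {0}) :
    ∃ W : Submodule ℝ X, Module.rank ℝ W = α ∧ (W : Set X) \ {0} ⊆ (Y : Set X)ᶜ ∧
      ∀ Z : Submodule ℝ X, IsClosed (Z : Set X) → W ≤ Z →
        ¬ ((Z : Set X) ⊆ (Y : Set X)ᶜ ∪ {0}) := by
  obtain ⟨W, hWrank, hWY⟩ := hlin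
  obtain ⟨y, hyY, hy0⟩ := (Submodule.ne_bot_iff Y).mp hY₁
  have hcard : Cardinal.mk (Module.Free.ChooseBasisIndex ℝ W) = α := by
    rw [← hWrank, Module.Free.rank_eq_card_chooseBasisIndex]
  have : Infinite (Module.Free.ChooseBasisIndex ℝ W) := Cardinal.infinite_iff.mpr (hcard ▸ hα)
  let w := fun i => (Module.Free.chooseBasis ℝ W i : X)
  have hw : LinearIndependent ℝ (Y.mkQ ∘ w) :=
    (Module.Free.chooseBasis ℝ W).linearIndependent_mkQ_of_disjoint <|
      Submodule.disjoint_def.mpr fun x hxW hxY => (hWY hxW).resolve_left (not_not.mpr hxY)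
  obtain ⟨c, hc0, hyc⟩ := exists_mem_closure_range_add_smul y w
  have hg := linearIndependent_mkQ_add_smul hw hyY hc0
  refine ⟨Submodule.span ℝ (Set.range fun i => y + c i • w i), ?_, ?_, ?_⟩
  · rw [rank_span (hg.of_comp _), Cardinal.mk_range_eq _ (hg.of_comp _).injective, hcard]
  · rintro x ⟨hx, hx0⟩ hxY
    exact hx0 (Submodule.disjoint_def.mp (disjoint_span_of_linearIndependent_mkQ hg) x hx hxY)
  · intro Z hZ hle hZY
    have hyZ : y ∈ Z := closure_minimal (Set.range_subset_iff.mpr fun i =>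
      hle (Submodule.subset_span ⟨i, rfl⟩)) hZ hyc
    exact (hZY hyZ).elim (· hyY) hy0

/-- if `Y` is a nontrivial proper subspace of a Banach space `X`, `α` is an
infinite cardinal, and `X \ Y` is `α`-lineable, then `X \ Y` is not `(α, β)`-spaceable for
any `β`: some `α`-dimensional subspace `W` with `W \ {0} ⊆ X \ Y` extends to no closed
subspace inside `(X \ Y) ∪ {0}`. -/
theorem stmt1 (X : Type*) [NormedAddCommGroup X] [NormedSpace ℝ X] [CompleteSpace X]
    (Y : Submodule ℝ X) (hY₁ : Y ≠ ⊥) (hY₂ : Y ≠ ⊤)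
    (α : Cardinal) (hα : Cardinal.aleph0 ≤ α)
    (hlin : ∃ W : Submodule ℝ X, Module.rank ℝ W = α ∧
      (W : Set X) ⊆ (Y : Set X)ᶜ ∪ {0}) :
    ∃ W : Submodule ℝ X, Module.rank ℝ W = α ∧ (W : Set X) \ {0} ⊆ (Y : Set X)ᶜ ∧
      ∀ Z : Submodule ℝ X, IsClosed (Z : Set X) → W ≤ Z →
        ¬ ((Z : Set X) ⊆ (Y : Set X)ᶜ ∪ {0}) :=
  stmt1_general X Y hY₁ α hα hlin
end

section
/- Let V be an infinite-dimensional Banach space and let v₁, …, vₙ ∈ V be linearly independent unit vectors. Then there exists a basic sequence (u_k)_{k≥1} in V (i.e., a Schauder basis of the closed linear span of {u_k : k ∈ ℕ}) with u_k = v_k for each k = 1, …, n. -/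
/-- `u` is a basic sequence in a Banach space: all `u k` are nonzero and there is a
constant `C` such that `‖∑_{k<s} λ k • u k‖ ≤ C * ‖∑_{k<r} λ k • u k‖` for `s ≤ r`
(equivalently, `u` is a Schauder basis of the closure of its span). -/
def IsBasicSeq (𝕜 : Type*) [RCLike 𝕜] {V : Type*} [NormedAddCommGroup V]
    [NormedSpace 𝕜 V] (u : ℕ → V) : Prop :=
  (∀ k, u k ≠ 0) ∧ ∃ C : ℝ, ∀ s r : ℕ, s ≤ r → ∀ lam : ℕ → 𝕜,
    ‖∑ k ∈ Finset.range s, lam k • u k‖ ≤ C * ‖∑ k ∈ Finset.range r, lam k • u k‖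

/-!
Mazur's construction. The finitely many vectors `v i` are linearly independent, so the
coefficient functionals on their span are bounded and the partial sums of the first `n` terms
are controlled by a constant. Beyond `n`, each new unit vector `u m` is chosen in the common
kernel of finitely many norm-one functionals that norm the finite-dimensional space
`span {u k | k < m}` up to a factor `1 + 2⁻ᵐ` (compactness of its unit sphere plus
Hahn–Banach); then `‖y‖ ≤ (1 + 2⁻ᵐ) ‖y + c • u m‖` for `y` in that span, and the product of
these factors is bounded by `exp 2`.
-/

open Finset

section RecExtend

variable {α : Type*} {n : ℕ} (v : Fin n → α) (next : (k : ℕ) → (Fin k → α) → α)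

def recExtend (k : ℕ) : α :=
  if h : k < n then v ⟨k, h⟩ else next k fun j => recExtend j
decreasing_by exact j.isLt

theorem recExtend_of_lt {k : ℕ} (hk : k < n) : recExtend v next k = v ⟨k, hk⟩ := by
  rw [recExtend, dif_pos hk]

theorem recExtend_of_le {k : ℕ} (hk : n ≤ k) :
    recExtend v next k = next k fun j => recExtend v next j := by
  rw [recExtend, dif_neg hk.not_gt]

end RecExtend

theorem le_prod_Ico_mul_of_le_mul_succ {f c : ℕ → ℝ} {s r : ℕ} (hsr : s ≤ r)
    (hc : ∀ m, 0 ≤ c m) (h : ∀ m, s ≤ m → m < r → f m ≤ c m * f (m + 1)) :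
    f s ≤ (∏ m ∈ Ico s r, c m) * f r := by
  induction r, hsr using Nat.le_induction with
  | base => simp
  | succ r hsr ih =>
    calc f s ≤ (∏ m ∈ Ico s r, c m) * f r := ih fun m hsm hmr => h m hsm (by omega)
      _ ≤ (∏ m ∈ Ico s r, c m) * (c r * f (r + 1)) := by
        gcongr
        · exact prod_nonneg fun m _ => hc m
        · exact h r hsr (by omega)
      _ = (∏ m ∈ Ico s (r + 1), c m) * f (r + 1) := by
        rw [prod_Ico_succ_top hsr, mul_assoc]

theorem prod_one_add_le_exp_tsum {ι : Type*} {ε : ι → ℝ} (hε : ∀ i, 0 ≤ ε i) (hs : Summable ε)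
    (t : Finset ι) : ∏ i ∈ t, (1 + ε i) ≤ Real.exp (∑' i, ε i) :=
  calc ∏ i ∈ t, (1 + ε i) ≤ ∏ i ∈ t, Real.exp (ε i) :=
        prod_le_prod (fun i _ => by linarith [hε i])
          fun i _ => by linarith [Real.add_one_le_exp (ε i)]
    _ = Real.exp (∑ i ∈ t, ε i) := (Real.exp_sum t ε).symm
    _ ≤ Real.exp (∑' i, ε i) := Real.exp_le_exp.2 (hs.sum_le_tsum t fun i _ => hε i)

theorem Module.exists_ne_zero_forall_apply_eq_zero {K V : Type*} [Field K] [AddCommGroup V]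
    [Module K V] (hV : ¬ FiniteDimensional K V) {ι : Type*} [Finite ι] (g : ι → Module.Dual K V) :
    ∃ x ≠ 0, ∀ i, g i x = 0 := by
  have hker : LinearMap.ker (LinearMap.pi g) ≠ ⊥ := fun h =>
    hV (Module.Finite.of_injective _ (LinearMap.ker_eq_bot.1 h))
  obtain ⟨x, hx, hx0⟩ := Submodule.exists_mem_ne_zero_of_ne_bot hker
  exact ⟨x, hx0, fun i => congrFun (LinearMap.mem_ker.1 hx) i⟩

section Normed

variable {𝕜 : Type*} [RCLike 𝕜] {V : Type*} [NormedAddCommGroup V] [NormedSpace 𝕜 V]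

theorem Submodule.exists_finset_strongDual_norming (F : Submodule 𝕜 V) [FiniteDimensional 𝕜 F]
    {ε : ℝ} (hε : 0 < ε) :
    ∃ s : Finset (StrongDual 𝕜 V), (∀ g ∈ s, ‖g‖ ≤ 1) ∧
      ∀ y ∈ F, y ≠ 0 → ∃ g ∈ s, ‖y‖ ≤ (1 + ε) * ‖g y‖ := by
  set S : Set V := (↑) '' Metric.sphere (0 : F) 1
  have hS : IsCompact S := (isCompact_sphere _ _).image continuous_subtype_val
  have hcover : S ⊆ ⋃ g ∈ Metric.closedBall (0 : StrongDual 𝕜 V) 1, {w | 1 < (1 + ε) * ‖g w‖} := by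
    rintro _ ⟨w, hw, rfl⟩
    have hw1 : ‖(w : V)‖ = 1 := mem_sphere_zero_iff_norm.1 hw
    obtain ⟨g, hg, hgw⟩ := exists_dual_vector 𝕜 (w : V) (by simp [hw1])
    refine Set.mem_biUnion (x := g) (by simp [hg]) ?_
    simp [hgw, hw1, hε]
  obtain ⟨t, hts, ht, hSt⟩ := hS.elim_finite_subcover_image
    (fun g _ => isOpen_lt continuous_const (by fun_prop)) hcover
  refine ⟨ht.toFinset, fun g hg => by simpa using hts (ht.mem_toFinset.1 hg), fun y hy hy0 => ?_⟩
  have hyS : (‖y‖⁻¹ : 𝕜) • y ∈ S :=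
    ⟨⟨_, F.smul_mem _ hy⟩, by simp [norm_smul_inv_norm hy0], rfl⟩
  obtain ⟨g, hgt, hg⟩ := Set.mem_iUnion₂.1 (hSt hyS)
  refine ⟨g, ht.mem_toFinset.2 hgt, ?_⟩
  have hy : 0 < ‖y‖ := norm_pos_iff.2 hy0
  simp only [Set.mem_ofPred_eq, map_smul, norm_smul, norm_inv, RCLike.norm_ofReal, abs_norm] at hg
  rw [← mul_lt_mul_iff_of_pos_left hy] at hg
  field_simp at hg
  linarith

theorem exists_norm_eq_one_forall_norm_le_mul_norm_add_smul (hV : ¬ FiniteDimensional 𝕜 V)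
    (F : Submodule 𝕜 V) [FiniteDimensional 𝕜 F] {ε : ℝ} (hε : 0 < ε) :
    ∃ x : V, ‖x‖ = 1 ∧ ∀ y ∈ F, ∀ c : 𝕜, ‖y‖ ≤ (1 + ε) * ‖y + c • x‖ := by
  obtain ⟨s, hs1, hsF⟩ := F.exists_finset_strongDual_norming hε
  obtain ⟨x, hx0, hxs⟩ := Module.exists_ne_zero_forall_apply_eq_zero hV
    fun g : s => ((g : StrongDual 𝕜 V) : V →ₗ[𝕜] 𝕜)
  refine ⟨(‖x‖⁻¹ : 𝕜) • x, norm_smul_inv_norm hx0, fun y hy c => ?_⟩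
  rcases eq_or_ne y 0 with rfl | hy0
  · simp only [norm_zero]; positivity
  obtain ⟨g, hgs, hgy⟩ := hsF y hy hy0
  have hgx : g x = 0 := hxs ⟨g, hgs⟩
  calc ‖y‖ ≤ (1 + ε) * ‖g y‖ := hgy
    _ = (1 + ε) * ‖g (y + c • (‖x‖⁻¹ : 𝕜) • x)‖ := by simp [hgx]
    _ ≤ (1 + ε) * ‖y + c • (‖x‖⁻¹ : 𝕜) • x‖ := by
      gcongr
      exact (g.le_of_opNorm_le (hs1 g hgs) _).trans_eq (one_mul _)

theorem LinearIndependent.exists_norm_sum_le_mul_norm_sum_of_subset {ι : Type*} [Fintype ι]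
    {v : ι → V} (hv : LinearIndependent 𝕜 v) :
    ∃ C, 0 ≤ C ∧ ∀ t t' : Finset ι, t ⊆ t' → ∀ a : ι → 𝕜,
      ‖∑ i ∈ t, a i • v i‖ ≤ C * ‖∑ i ∈ t', a i • v i‖ := by
  classical
  obtain ⟨K, -, hK⟩ := (Fintype.linearCombination 𝕜 v).exists_antilipschitzWith
    (LinearMap.ker_eq_bot.2 (linearIndependent_iff_injective_fintypeLinearCombination.1 hv))
  refine ⟨(∑ i, ‖v i‖) * K, by positivity, fun t t' htt' a => ?_⟩
  set b : ι → 𝕜 := fun i => if i ∈ t' then a i else 0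
  have hb : ‖b‖ ≤ K * ‖∑ i ∈ t', a i • v i‖ := by
    simpa [Fintype.linearCombination_apply, b, ite_smul, Finset.sum_ite_mem] using
      hK.le_mul_norm (map_zero _) b
  calc ‖∑ i ∈ t, a i • v i‖ = ‖∑ i ∈ t, b i • v i‖ := by
        congr 1; exact Finset.sum_congr rfl fun i hi => by simp [b, htt' hi]
    _ ≤ ∑ i ∈ t, ‖b‖ * ‖v i‖ := norm_sum_le_of_le _ fun i _ => by
        rw [norm_smul]; gcongr; exact norm_le_pi_norm b i
    _ ≤ ∑ i, ‖b‖ * ‖v i‖ := Finset.sum_le_sum_of_subset_of_nonneg t.subset_univ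
        fun i _ _ => by positivity
    _ ≤ (∑ i, ‖v i‖) * K * ‖∑ i ∈ t', a i • v i‖ := by
        rw [← Finset.mul_sum, mul_comm, mul_assoc]; gcongr

theorem Fin.sum_filter_val_lt_eq_sum_range {M : Type*} [AddCommMonoid M] {n m : ℕ} (h : m ≤ n)
    (f : ℕ → M) : ∑ i ∈ univ.filter (fun i : Fin n => (i : ℕ) < m), f i = ∑ k ∈ range m, f k := by
  rw [Finset.sum_filter, Fin.sum_univ_eq_sum_range (fun i => if i < m then f i else 0),
    ← Finset.sum_filter]
  congr 1
  ext k
  simp only [mem_filter, mem_range]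
  omega

theorem exists_norm_sum_range_le_of_linearIndependent {u : ℕ → V} {n : ℕ}
    (hu : LinearIndependent 𝕜 fun i : Fin n => u i) :
    ∃ C, 0 ≤ C ∧ ∀ s r, s ≤ r → r ≤ n → ∀ lam : ℕ → 𝕜,
      ‖∑ k ∈ range s, lam k • u k‖ ≤ C * ‖∑ k ∈ range r, lam k • u k‖ := by
  obtain ⟨C, hC, hCt⟩ := hu.exists_norm_sum_le_mul_norm_sum_of_subset
  refine ⟨C, hC, fun s r hsr hrn lam => ?_⟩
  have hsub : univ.filter (fun i : Fin n => (i : ℕ) < s) ⊆ univ.filter (fun i => (i : ℕ) < r) :=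
    fun i => by simp only [mem_filter, mem_univ, true_and]; omega
  rw [← Fin.sum_filter_val_lt_eq_sum_range (hsr.trans hrn),
    ← Fin.sum_filter_val_lt_eq_sum_range hrn]
  exact hCt _ _ hsub fun i => lam i

end Normed

section Normed

variable {𝕜 : Type*} [RCLike 𝕜] {V : Type*} [NormedAddCommGroup V] [NormedSpace 𝕜 V]

theorem isBasicSeq_of_norm_sum_range_le {u : ℕ → V} (hu : ∀ k, u k ≠ 0) {n : ℕ} {C : ℝ}
    (hC : 0 ≤ C) (hhead : ∀ s r, s ≤ r → r ≤ n → ∀ lam : ℕ → 𝕜,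
      ‖∑ k ∈ range s, lam k • u k‖ ≤ C * ‖∑ k ∈ range r, lam k • u k‖)
    {ε : ℕ → ℝ} (hε : ∀ m, 0 ≤ ε m) (hεs : Summable ε)
    (htail : ∀ m, n ≤ m → ∀ lam : ℕ → 𝕜,
      ‖∑ k ∈ range m, lam k • u k‖ ≤ (1 + ε m) * ‖∑ k ∈ range (m + 1), lam k • u k‖) :
    IsBasicSeq 𝕜 u := by
  set E := Real.exp (∑' m, ε m)
  have hE : 1 ≤ E := Real.one_le_exp (tsum_nonneg hε)
  refine ⟨hu, max C 1 * E, fun s r hsr lam => ?_⟩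
  set S : ℕ → ℝ := fun m => ‖∑ k ∈ range m, lam k • u k‖
  have hS : ∀ m, 0 ≤ S m := fun m => norm_nonneg _
  have htail' : ∀ s r, n ≤ s → s ≤ r → S s ≤ E * S r := fun s r hns hsr =>
    (le_prod_Ico_mul_of_le_mul_succ hsr (fun m => by linarith [hε m])
      fun m hsm _ => htail m (hns.trans hsm) lam).trans
    (by gcongr; exact prod_one_add_le_exp_tsum hε hεs _)
  rcases le_total r n with hrn | hnr
  · calc S s ≤ C * S r := hhead s r hsr hrn lam
      _ ≤ max C 1 * E * S r := by gcongr; nlinarith [le_max_left C 1, hS r]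
  rcases le_total s n with hsn | hns
  · calc S s ≤ C * S n := hhead s n hsn le_rfl lam
      _ ≤ max C 1 * (E * S r) := by gcongr; exacts [le_max_left C 1, htail' n r le_rfl hnr]
      _ = max C 1 * E * S r := by ring
  · calc S s ≤ E * S r := htail' s r hns hsr
      _ ≤ max C 1 * E * S r := by gcongr; nlinarith [le_max_right C 1]

end Normed

theorem stmt4_general (𝕜 : Type*) [RCLike 𝕜] (V : Type*) [NormedAddCommGroup V]
    [NormedSpace 𝕜 V] (hV : ¬ FiniteDimensional 𝕜 V)
    (n : ℕ) (v : Fin n → V) (hind : LinearIndependent 𝕜 v) :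
    ∃ u : ℕ → V, IsBasicSeq 𝕜 u ∧ ∀ i : Fin n, u (i : ℕ) = v i := by
  choose next hnext_norm hnext using fun (k : ℕ) (f : Fin k → V) =>
    haveI := FiniteDimensional.span_of_finite 𝕜 (Set.finite_range f)
    exists_norm_eq_one_forall_norm_le_mul_norm_add_smul hV (Submodule.span 𝕜 (Set.range f))
      (ε := (1 / 2 : ℝ) ^ k) (by positivity)
  set u := recExtend v next
  have hu_head (i : Fin n) : u i = v i := recExtend_of_lt v next i.isLt
  have hu_tail {k : ℕ} (hk : n ≤ k) : u k = next k fun j => u j := recExtend_of_le v next hk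
  have hu_indep : LinearIndependent 𝕜 fun i : Fin n => u i := by simpa only [hu_head] using hind
  obtain ⟨C, hC, hhead⟩ := exists_norm_sum_range_le_of_linearIndependent hu_indep
  refine ⟨u, isBasicSeq_of_norm_sum_range_le (fun k => ?_) hC hhead (fun m => by positivity)
    summable_geometric_two fun m hm lam => ?_, hu_head⟩
  · rcases lt_or_ge k n with hk | hk
    · exact hu_head ⟨k, hk⟩ ▸ hind.ne_zero _
    · rw [hu_tail hk, ← norm_ne_zero_iff, hnext_norm]
      exact one_ne_zero
  · rw [sum_range_succ, hu_tail hm]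
    exact hnext m _ _ (Submodule.sum_mem _ fun k hk =>
      Submodule.smul_mem _ _ (Submodule.subset_span ⟨⟨k, mem_range.1 hk⟩, rfl⟩)) (lam m)

/-- Lemma 3.4: in an infinite-dimensional Banach space, any finite
linearly independent family of unit vectors extends to a basic sequence. -/
theorem stmt4 (𝕜 : Type*) [RCLike 𝕜] (V : Type*) [NormedAddCommGroup V]
    [NormedSpace 𝕜 V] [CompleteSpace V] (hV : ¬ FiniteDimensional 𝕜 V)
    (n : ℕ) (v : Fin n → V) (hind : LinearIndependent 𝕜 v)
    (hnorm : ∀ i, ‖v i‖ = 1) :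
    ∃ u : ℕ → V, IsBasicSeq 𝕜 u ∧ ∀ i : Fin n, u (i : ℕ) = v i :=
  stmt4_general 𝕜 V hV n v hind
end

section
/- Let W be a Banach space, (w_k) a regular basic sequence in W (a basic sequence bounded away from zero), and (u_k) a sequence in W with Σ_{k=1}^∞ ‖u_k‖ < ∞. If the only scalar sequence (a_k) with Σ_{k=1}^∞ a_k (w_k + u_k) = 0 (convergence in norm) is the zero sequence, then (w_k + u_k) is a basic sequence in W. -/
open Filter Finset Topology

def HasBasisConstant (𝕜 : Type*) [RCLike 𝕜] {V : Type*} [NormedAddCommGroup V]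
    [NormedSpace 𝕜 V] (x : ℕ → V) (C : ℝ) : Prop :=
  ∀ s r : ℕ, s ≤ r → ∀ lam : ℕ → 𝕜,
    ‖∑ k ∈ range s, lam k • x k‖ ≤ C * ‖∑ k ∈ range r, lam k • x k‖

def OmegaLinearIndependent (𝕜 : Type*) [RCLike 𝕜] {V : Type*} [NormedAddCommGroup V]
    [NormedSpace 𝕜 V] (x : ℕ → V) : Prop :=
  ∀ a : ℕ → 𝕜, Tendsto (fun N => ∑ k ∈ range N, a k • x k) atTop (𝓝 0) → ∀ k, a k = 0

section

variable {𝕜 : Type*} [RCLike 𝕜] {V : Type*} [NormedAddCommGroup V] [NormedSpace 𝕜 V]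

theorem sum_range_smul_of_eq_zero {b : ℕ → 𝕜} {x : ℕ → V} {R N : ℕ} (hRN : R ≤ N)
    (hb : ∀ k, R ≤ k → b k = 0) :
    ∑ k ∈ range N, b k • x k = ∑ k ∈ range R, b k • x k := by
  refine (sum_subset (range_subset_range.mpr hRN) fun k _ hk => ?_).symm
  rw [hb k (not_lt.mp (mem_range.not.mp hk)), zero_smul]

theorem sum_range_single_one_smul (x : ℕ → V) {k N : ℕ} (hk : k < N) :
    ∑ j ∈ range N, (Pi.single k (1 : 𝕜) : ℕ → 𝕜) j • x j = x k := by
  rw [sum_eq_single_of_mem k (mem_range.mpr hk) fun j _ hj => by simp [hj], Pi.single_eq_same,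
    one_smul]

theorem OmegaLinearIndependent.ne_zero {x : ℕ → V} (hx : OmegaLinearIndependent 𝕜 x) (k : ℕ) :
    x k ≠ 0 := by
  intro hxk
  have hsum : ∀ᶠ N in atTop, x k = ∑ j ∈ range N, (Pi.single k (1 : 𝕜) : ℕ → 𝕜) j • x j :=
    (eventually_gt_atTop k).mono fun N hN => (sum_range_single_one_smul x hN).symm
  have := hx _ (hxk ▸ tendsto_const_nhds.congr' hsum) k
  simp at this

theorem norm_sum_smul_le_mul_tsum {u : ℕ → V} (hu : Summable (‖u ·‖)) {lam : ℕ → 𝕜} {s : ℕ}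
    {M : ℝ} (hM : 0 ≤ M) (hlam : ∀ k < s, ‖lam k‖ ≤ M) :
    ‖∑ k ∈ range s, lam k • u k‖ ≤ M * ∑' k, ‖u k‖ :=
  calc ‖∑ k ∈ range s, lam k • u k‖
      ≤ ∑ k ∈ range s, M * ‖u k‖ := by
        refine (norm_sum_le _ _).trans (sum_le_sum fun k hk => ?_)
        rw [norm_smul]
        exact mul_le_mul_of_nonneg_right (hlam k (mem_range.mp hk)) (norm_nonneg _)
    _ ≤ M * ∑' k, ‖u k‖ := by
        rw [← mul_sum]
        exact mul_le_mul_of_nonneg_left (hu.sum_le_tsum _ fun k _ => norm_nonneg _) hM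

theorem norm_sum_smul_add_le {w u : ℕ → V} {B : ℝ} (hB : 0 ≤ B) (hu : Summable (‖u ·‖))
    (hcoef : ∀ (lam : ℕ → 𝕜) {r k : ℕ}, k < r → ‖lam k‖ ≤ B * ‖∑ j ∈ range r, lam j • w j‖)
    (lam : ℕ → 𝕜) (s : ℕ) :
    ‖∑ k ∈ range s, lam k • (w k + u k)‖
      ≤ (1 + B * ∑' k, ‖u k‖) * ‖∑ k ∈ range s, lam k • w k‖ := by
  have hpert := norm_sum_smul_le_mul_tsum hu (mul_nonneg hB (norm_nonneg _))
    fun k (hk : k < s) => hcoef lam hk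
  simp only [smul_add, sum_add_distrib]
  linarith [norm_add_le (∑ k ∈ range s, lam k • w k) (∑ k ∈ range s, lam k • u k)]

theorem exists_normalized_of_not_bounded_below {x y : ℕ → V}
    (h : ¬∃ c > 0, ∀ (lam : ℕ → 𝕜) r,
      c * ‖∑ k ∈ range r, lam k • x k‖ ≤ ‖∑ k ∈ range r, lam k • y k‖) :
    ∃ (ν : ℕ → ℕ → 𝕜) (r : ℕ → ℕ), (∀ m k, r m ≤ k → ν m k = 0) ∧
      (∀ m, ‖∑ k ∈ range (r m), ν m k • x k‖ = 1) ∧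
      Tendsto (fun m => ∑ k ∈ range (r m), ν m k • y k) atTop (𝓝 0) := by
  push Not at h
  choose lam r hlt using fun m : ℕ => h (1 / ((m : ℝ) + 1)) (by positivity)
  set S : ℕ → ℝ := fun m => ‖∑ k ∈ range (r m), lam m k • x k‖
  have hS : ∀ m, 0 < S m := fun m =>
    (norm_nonneg _).lt_of_ne fun h0 => (norm_nonneg _).not_gt (by simpa [S, ← h0] using hlt m)
  refine ⟨fun m k => if k < r m then ((S m)⁻¹ : 𝕜) * lam m k else 0, r,
    fun m k hk => if_neg hk.not_gt, ?_⟩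
  have hsum : ∀ m (z : ℕ → V), ∑ k ∈ range (r m), (if k < r m then ((S m)⁻¹ : 𝕜) * lam m k
      else 0) • z k = ((S m)⁻¹ : 𝕜) • ∑ k ∈ range (r m), lam m k • z k := fun m z => by
    rw [smul_sum]
    exact sum_congr rfl fun k hk => by rw [if_pos (mem_range.mp hk), mul_smul]
  have hnorm : ∀ m (z : ℕ → V), ‖((S m)⁻¹ : 𝕜) • ∑ k ∈ range (r m), lam m k • z k‖
      = (S m)⁻¹ * ‖∑ k ∈ range (r m), lam m k • z k‖ := fun m z => by
    rw [norm_smul, ← RCLike.ofReal_inv, RCLike.norm_ofReal, abs_of_pos (inv_pos.mpr (hS m))]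
  refine ⟨fun m => by rw [hsum, hnorm, inv_mul_cancel₀ (hS m).ne'], ?_⟩
  refine squeeze_zero_norm (fun m => ?_) tendsto_one_div_add_atTop_nhds_zero_nat
  rw [hsum, hnorm, inv_mul_le_iff₀ (hS m), mul_comm]
  exact (hlt m).le

theorem exists_strictMono_tendsto_of_norm_le {ν : ℕ → ℕ → 𝕜} {B : ℝ}
    (hB : ∀ m k, ‖ν m k‖ ≤ B) :
    ∃ (a : ℕ → 𝕜) (φ : ℕ → ℕ), (∀ k, ‖a k‖ ≤ B) ∧ StrictMono φ ∧
      ∀ k, Tendsto (fun m => ν (φ m) k) atTop (𝓝 (a k)) := by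
  obtain ⟨a, haB, φ, hφ, hlim⟩ :=
    (isCompact_univ_pi fun _ : ℕ => isCompact_closedBall (0 : 𝕜) B).isSeqCompact
      (x := ν) fun m k _ => by simpa using hB m k
  exact ⟨a, φ, fun k => by simpa using haB k trivial, hφ, tendsto_pi_nhds.mp hlim⟩

theorem tendsto_sum_range_smul_of_norm_le [CompleteSpace V] {ν : ℕ → ℕ → 𝕜} {r : ℕ → ℕ}
    (hν : ∀ m k, r m ≤ k → ν m k = 0) {a : ℕ → 𝕜}
    (ha : ∀ k, Tendsto (fun m => ν m k) atTop (𝓝 (a k))) {B : ℝ} (hB : ∀ m k, ‖ν m k‖ ≤ B)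
    {u : ℕ → V} (hu : Summable (‖u ·‖)) :
    Tendsto (fun m => ∑ k ∈ range (r m), ν m k • u k) atTop (𝓝 (∑' k, a k • u k)) := by
  have hdom := tendsto_tsum_of_dominated_convergence (hu.mul_left B)
    (fun k => (ha k).smul_const (u k)) (Eventually.of_forall fun m k => by
      rw [norm_smul]; exact mul_le_mul_of_nonneg_right (hB m k) (norm_nonneg _))
  refine hdom.congr fun m => tsum_eq_sum fun k hk => ?_
  rw [hν m k (not_lt.mp (mem_range.not.mp hk)), zero_smul]

namespace HasBasisConstant

variable {x : ℕ → V} {C : ℝ}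

theorem one_le (hC : HasBasisConstant 𝕜 x C) {k : ℕ} (hxk : x k ≠ 0) : 1 ≤ C := by
  have h := hC (k + 1) (k + 1) le_rfl (Pi.single k (1 : 𝕜))
  rw [sum_range_single_one_smul x k.lt_succ_self] at h
  exact le_of_mul_le_mul_right (by rwa [one_mul]) (norm_pos_iff.mpr hxk)

theorem norm_coeff_le (hC : HasBasisConstant 𝕜 x C) {L : ℝ} (hL : 0 < L)
    (hLx : ∀ k, L ≤ ‖x k‖) (lam : ℕ → 𝕜) {r k : ℕ} (hk : k < r) :
    ‖lam k‖ ≤ 2 * C / L * ‖∑ j ∈ range r, lam j • x j‖ := by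
  have hdiff : lam k • x k =
      ∑ j ∈ range (k + 1), lam j • x j - ∑ j ∈ range k, lam j • x j := by
    rw [sum_range_succ, add_sub_cancel_left]
  have hterm : ‖lam k • x k‖ ≤ 2 * C * ‖∑ j ∈ range r, lam j • x j‖ := by
    rw [hdiff]
    have := hC (k + 1) r hk lam
    have := hC k r hk.le lam
    linarith [norm_sub_le (∑ j ∈ range (k + 1), lam j • x j) (∑ j ∈ range k, lam j • x j)]
  have hreg : ‖lam k‖ * L ≤ ‖lam k • x k‖ := by
    rw [norm_smul]
    exact mul_le_mul_of_nonneg_left (hLx k) (norm_nonneg _)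
  rw [div_mul_eq_mul_div, le_div_iff₀ hL]
  linarith

theorem of_norm_sum_le {y : ℕ → V} (hC : HasBasisConstant 𝕜 x C) (hC0 : 0 ≤ C) {c D : ℝ}
    (hc : 0 < c) (hD : 0 ≤ D)
    (hlower : ∀ (lam : ℕ → 𝕜) r, c * ‖∑ k ∈ range r, lam k • x k‖ ≤ ‖∑ k ∈ range r, lam k • y k‖)
    (hupper : ∀ (lam : ℕ → 𝕜) s, ‖∑ k ∈ range s, lam k • y k‖ ≤ D * ‖∑ k ∈ range s, lam k • x k‖) :
    HasBasisConstant 𝕜 y (D * C / c) := by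
  intro s r hsr lam
  calc ‖∑ k ∈ range s, lam k • y k‖
      ≤ D * ‖∑ k ∈ range s, lam k • x k‖ := hupper lam s
    _ ≤ D * (C * ‖∑ k ∈ range r, lam k • x k‖) := by gcongr; exact hC s r hsr lam
    _ ≤ D * (C * (‖∑ k ∈ range r, lam k • y k‖ / c)) := by
        gcongr; rw [le_div_iff₀ hc, mul_comm]; exact hlower lam r
    _ = D * C / c * ‖∑ k ∈ range r, lam k • y k‖ := by ring

/-- The basis constant bounds every partial sum of `ν m - ν m'` by its full sum, so the
partial sums of `∑ ν m k • x k` converge uniformly in `N` as `m → ∞`. -/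
theorem tendsto_sum_of_tendsto (hC : HasBasisConstant 𝕜 x C) {ν : ℕ → ℕ → 𝕜} {r : ℕ → ℕ}
    (hν : ∀ m k, r m ≤ k → ν m k = 0) {a : ℕ → 𝕜}
    (ha : ∀ k, Tendsto (fun m => ν m k) atTop (𝓝 (a k))) {y : V}
    (hy : Tendsto (fun m => ∑ k ∈ range (r m), ν m k • x k) atTop (𝓝 y)) :
    Tendsto (fun N => ∑ k ∈ range N, a k • x k) atTop (𝓝 y) := by
  set S : ℕ → V := fun m => ∑ k ∈ range (r m), ν m k • x k
  have hcauchy : ∀ m m' N, ‖∑ k ∈ range N, ν m k • x k - ∑ k ∈ range N, ν m' k • x k‖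
      ≤ C * ‖S m - S m'‖ := by
    intro m m' N
    have h := hC N (max (max (r m) (r m')) N) (le_max_right _ _) (ν m - ν m')
    simp only [Pi.sub_apply, sub_smul, sum_sub_distrib] at h
    rwa [sum_range_smul_of_eq_zero ((le_max_left _ _).trans (le_max_left _ _)) (hν m),
      sum_range_smul_of_eq_zero ((le_max_right _ _).trans (le_max_left _ _)) (hν m')] at h
  have hlim : ∀ m N, ‖∑ k ∈ range N, ν m k • x k - ∑ k ∈ range N, a k • x k‖
      ≤ C * ‖S m - y‖ := fun m N =>
    le_of_tendsto_of_tendsto'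
      (tendsto_const_nhds.sub (tendsto_finsetSum _ fun k _ => (ha k).smul_const (x k))).norm
      ((tendsto_const_nhds.sub hy).norm.const_mul C) (hcauchy m · N)
  have hsmall : Tendsto (fun m => (C + 1) * ‖S m - y‖) atTop (𝓝 0) := by
    simpa using ((tendsto_iff_norm_sub_tendsto_zero.mp hy).const_mul (C + 1))
  rw [Metric.tendsto_atTop]
  intro ε hε
  obtain ⟨m, hm⟩ := (hsmall.eventually (gt_mem_nhds hε)).exists
  refine ⟨r m, fun N hN => ?_⟩
  have hSm : ∑ k ∈ range N, ν m k • x k = S m := sum_range_smul_of_eq_zero hN (hν m)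
  have := hlim m N
  rw [hSm, norm_sub_rev] at this
  calc dist (∑ k ∈ range N, a k • x k) y
      ≤ ‖∑ k ∈ range N, a k • x k - S m‖ + ‖S m - y‖ := by
        rw [dist_eq_norm]; exact norm_sub_le_norm_sub_add_norm_sub _ _ _
    _ ≤ (C + 1) * ‖S m - y‖ := by linarith
    _ < ε := hm

theorem exists_pos_mul_le_norm_sum_add [CompleteSpace V] {u : ℕ → V} {B : ℝ}
    (hC : HasBasisConstant 𝕜 x C) (hB : 0 ≤ B)
    (hcoef : ∀ (lam : ℕ → 𝕜) {r k : ℕ}, k < r → ‖lam k‖ ≤ B * ‖∑ j ∈ range r, lam j • x j‖)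
    (hu : Summable (‖u ·‖)) (hind : OmegaLinearIndependent 𝕜 (fun k => x k + u k)) :
    ∃ c > 0, ∀ (lam : ℕ → 𝕜) r,
      c * ‖∑ k ∈ range r, lam k • x k‖ ≤ ‖∑ k ∈ range r, lam k • (x k + u k)‖ := by
  by_contra hcon
  obtain ⟨ν, r, hν, hnorm, hpert⟩ := exists_normalized_of_not_bounded_below hcon
  have hνB : ∀ m k, ‖ν m k‖ ≤ B := fun m k => by
    rcases lt_or_ge k (r m) with hk | hk
    · simpa [hnorm m] using hcoef (ν m) hk
    · simpa [hν m k hk] using hB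
  obtain ⟨a, φ, haB, hφ, ha⟩ := exists_strictMono_tendsto_of_norm_le hνB
  set z := ∑' k, a k • u k
  have hzu : Tendsto (fun m => ∑ k ∈ range (r (φ m)), ν (φ m) k • u k) atTop (𝓝 z) :=
    tendsto_sum_range_smul_of_norm_le (fun m => hν (φ m)) ha (fun m => hνB (φ m)) hu
  have hzx : Tendsto (fun m => ∑ k ∈ range (r (φ m)), ν (φ m) k • x k) atTop (𝓝 (-z)) := by
    have := (hpert.comp hφ.tendsto_atTop).sub hzu
    simpa only [Function.comp_def, smul_add, sum_add_distrib, add_sub_cancel_right, zero_sub]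
      using this
  have haw := hC.tendsto_sum_of_tendsto (fun m => hν (φ m)) ha hzx
  have hau : Tendsto (fun N => ∑ k ∈ range N, a k • u k) atTop (𝓝 z) :=
    ((hu.mul_left B).of_norm_bounded fun k => by
      rw [norm_smul]; exact mul_le_mul_of_nonneg_right (haB k) (norm_nonneg _))
      |>.hasSum.tendsto_sum_nat
  have ha0 : ∀ k, a k = 0 := hind a (by
    simpa only [smul_add, sum_add_distrib, neg_add_cancel] using haw.add hau)
  have hz0 : z = 0 := by simp [z, ha0]
  have hvanish : Tendsto (fun m => ‖∑ k ∈ range (r (φ m)), ν (φ m) k • x k‖) atTop (𝓝 0) := by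
    simpa [hz0] using hzx.norm
  simp only [hnorm] at hvanish
  exact one_ne_zero (tendsto_nhds_unique tendsto_const_nhds hvanish)

end HasBasisConstant

end

/-- Lemma 3.5, Kalton: a small perturbation of a regular basic sequence
which remains "independent" for infinite combinations is again a basic sequence. -/
theorem stmt5 (𝕜 : Type*) [RCLike 𝕜] (W : Type*) [NormedAddCommGroup W]
    [NormedSpace 𝕜 W] [CompleteSpace W]
    (w : ℕ → W) (hbasic : IsBasicSeq 𝕜 w) (hreg : ∃ L > 0, ∀ k, L ≤ ‖w k‖)
    (u : ℕ → W) (hsum : Summable (fun k => ‖u k‖))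
    (hindep : ∀ a : ℕ → 𝕜,
      Filter.Tendsto (fun N => ∑ k ∈ Finset.range N, a k • (w k + u k))
        Filter.atTop (nhds 0) → ∀ k, a k = 0) :
    IsBasicSeq 𝕜 (fun k => w k + u k) := by
  obtain ⟨hw0, C, hC⟩ := hbasic
  replace hC : HasBasisConstant 𝕜 w C := hC
  obtain ⟨L, hL, hLw⟩ := hreg
  have hC1 : 1 ≤ C := hC.one_le (hw0 0)
  have hB : 0 ≤ 2 * C / L := div_nonneg (by linarith) hL.le
  have hcoef := hC.norm_coeff_le hL hLw
  obtain ⟨c, hc, hlower⟩ := hC.exists_pos_mul_le_norm_sum_add hB hcoef hsum hindep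
  have hD : 0 ≤ 1 + 2 * C / L * ∑' k, ‖u k‖ := by
    have : 0 ≤ ∑' k, ‖u k‖ := tsum_nonneg fun k => norm_nonneg (u k)
    nlinarith
  exact ⟨OmegaLinearIndependent.ne_zero hindep,
    _, hC.of_norm_sum_le (by linarith) hc hD hlower (norm_sum_smul_add_le hB hsum hcoef)⟩
end

section
/- For every n ∈ ℕ, the set ℓ∞ \ c₀ is (n, 𝔠)-spaceable in ℓ∞: given any n-dimensional linear subspace Z of ℓ∞ with Z ∩ c₀ = {0}, there exists a closed linear subspace F of ℓ∞ of dimension 𝔠 with Z ⊆ F and F ∩ c₀ = {0}. Moreover, ℓ∞ \ c₀ is not (α, β)-spaceable for any infinite cardinal α and any β. -/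
open Filter Topology

/-- The space `ℓ∞` of bounded real sequences with the sup norm. -/
noncomputable abbrev EllInfty : Type := lp (fun _ : ℕ => ℝ) ⊤

/-- `c₀`, the subspace of `ℓ∞` of sequences converging to `0`. -/
noncomputable def cZero : Submodule ℝ EllInfty where
  carrier := {x | Tendsto (fun n => x n) atTop (𝓝 0)}
  add_mem' hx hy := by simpa using hx.add hy
  zero_mem' := by simp
  smul_mem' c x hx := by simpa using hx.const_mul c

/-!
The map `S x m = x (unpair m).1` is a linear isometry of `ℓ∞` that repeats every coordinate
infinitely often, so `S x ∈ c₀` forces `x = 0`. Given a finite-dimensional `Z` with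
`Z ∩ c₀ = 0`, the subspace `V = S⁻¹(Z + c₀)` embeds into `(Z + c₀)/c₀`, hence is
finite-dimensional; for a closed complement `W` of `V`, the subspace `F = Z + S W` is closed, has
dimension `dim W = 𝔠`, and meets `c₀` only in `0`.

For infinite `α ≤ 𝔠`, pick `y ∈ c₀ \ {0}`, distinct `r_t ∈ (0, 1)` for `t ∈ α`, and scalars
`ε_t ≠ 0` tending to `0` along a sequence of indices. The vectors `y + ε_t S(r_tⁿ)` are linearly
independent modulo `c₀`, so they span an `α`-dimensional subspace meeting `c₀` only in `0`; but its
closure contains `y`, so no closed subspace containing it avoids `c₀`.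
-/

open scoped Cardinal

universe u

theorem Submodule.rank_eq_of_isCompl_of_finiteDimensional {K V : Type*} [DivisionRing K]
    [AddCommGroup V] [Module K V] {p q : Submodule K V} (h : IsCompl p q) [FiniteDimensional K p]
    (hV : ℵ₀ ≤ Module.rank K V) : Module.rank K q = Module.rank K V := by
  have hsum := Submodule.rank_sup_add_rank_inf_eq p q
  rw [h.sup_eq_top, h.inf_eq_bot, rank_top, rank_bot, add_zero] at hsum
  have hp := Module.rank_lt_aleph0 K p
  rcases lt_or_ge (Module.rank K q) ℵ₀ with hq | hq
  · exact absurd (hsum ▸ Cardinal.add_lt_aleph0 hp hq) hV.not_gt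
  · rw [hsum, Cardinal.add_eq_right hq (hp.le.trans hq)]

section

variable {E : Type u} [NormedAddCommGroup E] [NormedSpace ℝ E] {C : Submodule ℝ E}

theorem Submodule.exists_isClosed_disjoint_extension_of_finiteDimensional [CompleteSpace E]
    (T : E →ₗᵢ[ℝ] E) (hT : LinearMap.ker (C.mkQ ∘ₗ T.toLinearMap) = ⊥) (hE : ℵ₀ ≤ Module.rank ℝ E)
    (Z : Submodule ℝ E) [FiniteDimensional ℝ Z] (hZ : Disjoint Z C) :
    ∃ F : Submodule ℝ E, IsClosed (F : Set E) ∧ Module.rank ℝ F = Module.rank ℝ E ∧ Z ≤ F ∧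
      Disjoint F C := by
  set V := (Z.map C.mkQ).comap (C.mkQ ∘ₗ T.toLinearMap)
  have : FiniteDimensional ℝ (LinearMap.ker (C.mkQ ∘ₗ T.toLinearMap)) := by
    rw [hT]; infer_instance
  obtain ⟨W, hW, hVW⟩ :=
    (Submodule.ClosedComplemented.of_finiteDimensional V).exists_isClosed_isCompl
  refine ⟨W.map T.toLinearMap ⊔ Z, ?_, ?_, le_sup_right, ?_⟩
  · refine Submodule.isClosed_sup_finiteDimensional _ _ ?_
    rw [Submodule.map_coe]
    exact T.isometry.isClosedEmbedding.isClosedMap _ hW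
  · refine le_antisymm (Submodule.rank_le _) ?_
    calc Module.rank ℝ E = Module.rank ℝ W :=
          (Submodule.rank_eq_of_isCompl_of_finiteDimensional hVW hE).symm
      _ = Module.rank ℝ (W.map T.toLinearMap) := (rank_map_eq T.injective W).symm
      _ ≤ _ := Submodule.rank_mono le_sup_left
  · rw [Submodule.disjoint_def]
    intro x hx hxC
    obtain ⟨_, ⟨w, hw, rfl⟩, z, hz, rfl⟩ := Submodule.mem_sup.1 hx
    have hwV : w ∈ V := ⟨-z, Z.neg_mem hz, by
      rw [LinearMap.comp_apply, Submodule.mkQ_apply, Submodule.mkQ_apply, Submodule.Quotient.eq]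
      convert C.neg_mem hxC using 1; abel⟩
    obtain rfl : w = 0 := Submodule.disjoint_def.1 hVW.disjoint w hwV hw
    rw [map_zero, zero_add] at hxC ⊢
    exact Submodule.disjoint_def.1 hZ z hz hxC

theorem exists_linearIndependent_mkQ_mem_closure_range {ι : Type*} [Infinite ι] {u : ι → E}
    (hu : LinearIndependent ℝ (C.mkQ ∘ u)) {y : E} (hy : y ∈ C) :
    ∃ w : ι → E, LinearIndependent ℝ (C.mkQ ∘ w) ∧ y ∈ closure (Set.range w) := by
  let e := Infinite.natEmbedding ι
  let ε : ι → ℝ := Function.extend e (fun k => (((k : ℝ) + 1) * (‖u (e k)‖ + 1))⁻¹) 1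
  have hεe : ∀ k : ℕ, ε (e k) = (((k : ℝ) + 1) * (‖u (e k)‖ + 1))⁻¹ :=
    fun k => e.injective.extend_apply _ _ k
  have hε : ∀ t, ε t ≠ 0 := fun t => by
    by_cases ht : ∃ k, e k = t
    · obtain ⟨k, rfl⟩ := ht
      rw [hεe]; positivity
    · simp [ε, Function.extend_apply' _ _ _ ht]
  refine ⟨fun t => y + ε t • u t, ?_, ?_⟩
  · have : C.mkQ ∘ (fun t => y + ε t • u t) =
        (fun t => Units.mk0 (ε t) (hε t)) • (C.mkQ ∘ u) := by
      ext t; simp [(Submodule.Quotient.mk_eq_zero C).2 hy, Units.smul_def]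
    rw [this]
    exact hu.units_smul _
  · have hsmall : Tendsto (fun k => ε (e k) • u (e k)) atTop (𝓝 0) := by
      refine squeeze_zero_norm (fun k => ?_) tendsto_one_div_add_atTop_nhds_zero_nat
      rw [norm_smul, hεe, norm_inv, Real.norm_of_nonneg (by positivity), ← div_eq_inv_mul,
        div_le_div_iff₀ (by positivity) (by positivity)]
      nlinarith [norm_nonneg (u (e k))]
    refine mem_closure_of_tendsto (b := atTop) (f := fun k => y + ε (e k) • u (e k)) ?_
      (Eventually.of_forall fun k => ⟨e k, rfl⟩)
    simpa using tendsto_const_nhds.add hsmall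

theorem Submodule.not_isABSpaceable_compl (hC : C ≠ ⊥) {ι : Type u} [Infinite ι] {u : ι → E}
    (hu : LinearIndependent ℝ (C.mkQ ∘ u)) (β : Cardinal) :
    ¬ IsABSpaceable ℝ E (C : Set E)ᶜ #ι β := by
  rintro ⟨-, hext⟩
  obtain ⟨y, hyC, hy0⟩ := Submodule.exists_mem_ne_zero_of_ne_bot hC
  obtain ⟨w, hw, hyw⟩ := exists_linearIndependent_mkQ_mem_closure_range hu hyC
  have hdisj : Disjoint (Submodule.span ℝ (Set.range w)) C := by
    simpa using Submodule.range_ker_disjoint hw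
  obtain ⟨F, hF, -, hwF, hFC⟩ := hext (Submodule.span ℝ (Set.range w))
    (by rw [rank_span (hw.of_comp _), Cardinal.mk_range_eq _ (hw.of_comp _).injective])
    (fun x hx => by
      by_cases hxC : x ∈ C
      exacts [Or.inr (Submodule.disjoint_def.1 hdisj x hx hxC), Or.inl hxC])
  rcases hFC (closure_minimal (Submodule.subset_span.trans hwF) hF hyw) with h | h
  exacts [h hyC, hy0 h]

end

namespace EllInfty

def spread : EllInfty →ₗᵢ[ℝ] EllInfty where
  toFun x := ⟨fun m => x (Nat.unpair m).1, memℓp_infty ⟨‖x‖, by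
    rintro _ ⟨m, rfl⟩
    exact lp.norm_apply_le_norm ENNReal.top_ne_zero x _⟩⟩
  map_add' _ _ := rfl
  map_smul' _ _ := rfl
  norm_map' x := by
    refine le_antisymm (lp.norm_le_of_forall_le (norm_nonneg x) fun m =>
      lp.norm_apply_le_norm ENNReal.top_ne_zero x _)
      (lp.norm_le_of_forall_le (norm_nonneg _) fun k => ?_)
    refine le_trans ?_ (lp.norm_apply_le_norm ENNReal.top_ne_zero _ (Nat.pair k 0))
    show ‖x k‖ ≤ ‖x (Nat.unpair (Nat.pair k 0)).1‖
    rw [Nat.unpair_pair]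

theorem spread_apply (x : EllInfty) (m : ℕ) : spread x m = x (Nat.unpair m).1 := rfl

theorem ker_mkQ_comp_spread : LinearMap.ker (cZero.mkQ ∘ₗ spread.toLinearMap) = ⊥ := by
  refine LinearMap.ker_eq_bot'.2 fun x hx => lp.ext <| funext fun k => ?_
  have hx : Tendsto (fun m => spread x m) atTop (𝓝 0) := (Submodule.Quotient.mk_eq_zero _).1 hx
  have hk : Tendsto (Nat.pair k) atTop atTop :=
    tendsto_atTop_mono (Nat.right_le_pair k) tendsto_id
  simpa [Function.comp_def, spread_apply] using (hx.comp hk)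

def geom (r : Set.Ioo (0 : ℝ) 1) : EllInfty := ⟨fun n => (r : ℝ) ^ n, memℓp_infty ⟨1, by
  rintro _ ⟨n, rfl⟩
  show ‖(r : ℝ) ^ n‖ ≤ 1
  rw [norm_pow, Real.norm_of_nonneg r.2.1.le]
  exact pow_le_one₀ r.2.1.le r.2.2.le⟩⟩

theorem linearIndependent_geom : LinearIndependent ℝ geom := by
  refine LinearIndependent.of_comp (LinearMap.pi fun n => lp.evalₗ (𝕜 := ℝ) _ ⊤ n) ?_
  have hinj : Function.Injective fun r : Set.Ioo (0 : ℝ) 1 => powersHom ℝ (r : ℝ) :=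
    fun r s h => Subtype.ext (by simpa using DFunLike.congr_fun h (Multiplicative.ofAdd 1))
  exact (linearIndependent_monoidHom (Multiplicative ℕ) ℝ).comp _ hinj

theorem rank_eq_continuum : Module.rank ℝ EllInfty = 𝔠 := by
  refine le_antisymm ?_ ?_
  · calc Module.rank ℝ EllInfty ≤ #EllInfty := rank_le_card ℝ EllInfty
      _ ≤ #(ℕ → ℝ) := Cardinal.mk_le_of_injective fun _ _ h => lp.ext h
      _ = 𝔠 := by rw [Cardinal.mk_arrow, Cardinal.mk_real]; simp
  · simpa [Cardinal.mk_Ioo_real] using linearIndependent_geom.cardinal_le_rank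

theorem cZero_ne_bot : cZero ≠ ⊥ := by
  refine (Submodule.ne_bot_iff _).2 ⟨lp.single (E := fun _ : ℕ => ℝ) ⊤ 0 1, ?_, fun h => by
    simpa using congrArg (fun x : EllInfty => x 0) h⟩
  refine tendsto_const_nhds.congr' ?_
  filter_upwards [eventually_gt_atTop 0] with n hn
  exact (lp.single_apply_ne (E := fun _ : ℕ => ℝ) ⊤ 0 _ hn.ne').symm

end EllInfty

open EllInfty

/-- `ℓ∞ \ c₀` is `(n, 𝔠)`-spaceable for every `n ∈ ℕ`, but is not
`(α, β)`-spaceable for any infinite cardinal `α` and any cardinal `β`. -/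
theorem stmt8 :
    (∀ n : ℕ, ∀ Z : Submodule ℝ EllInfty, Module.rank ℝ Z = n → Z ⊓ cZero = ⊥ →
      ∃ F : Submodule ℝ EllInfty, IsClosed (F : Set EllInfty) ∧
        Module.rank ℝ F = Cardinal.continuum ∧ Z ≤ F ∧ F ⊓ cZero = ⊥) ∧
    (∀ α β : Cardinal, Cardinal.aleph0 ≤ α →
      ¬ IsABSpaceable ℝ EllInfty ((cZero : Set EllInfty)ᶜ) α β) := by
  refine ⟨fun n Z hZr hZ => ?_, fun α β hα h => ?_⟩
  · have : FiniteDimensional ℝ Z := FiniteDimensional.of_rank_eq_nat hZr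
    simpa only [rank_eq_continuum, disjoint_iff] using
      Submodule.exists_isClosed_disjoint_extension_of_finiteDimensional spread
        ker_mkQ_comp_spread (rank_eq_continuum ▸ Cardinal.aleph0_le_continuum) Z (disjoint_iff.2 hZ)
  · have hα𝔠 : α ≤ Cardinal.continuum := by
      obtain ⟨⟨W, hW, -⟩, -⟩ := h
      exact hW ▸ (Submodule.rank_le W).trans rank_eq_continuum.le
    obtain ⟨emb⟩ : Nonempty (α.out ↪ Set.Ioo (0 : ℝ) 1) := by
      rwa [← Cardinal.le_def, Cardinal.mk_out, Cardinal.mk_Ioo_real zero_lt_one]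
    have : Infinite α.out := Cardinal.infinite_iff.2 (by rwa [Cardinal.mk_out])
    have hu : LinearIndependent ℝ (cZero.mkQ ∘ spread ∘ geom ∘ emb) :=
      (linearIndependent_geom.comp emb emb.injective).map' _ ker_mkQ_comp_spread
    rw [← Cardinal.mk_out α] at h
    exact Submodule.not_isABSpaceable_compl cZero_ne_bot hu β h
end

section
/- Let V be a metrizable separable topological vector space and W a subspace of infinite codimension. Then for every k ∈ ℕ, V \ W is (k, ℵ₀)-dense lineable: for every k-dimensional subspace G with G \ {0} ⊆ V \ W, there is a countably-infinite-dimensional dense subspace D of V with G ⊆ D ⊆ (V \ W) ∪ {0}. -/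
/-!
Fix a countable base `(U n)` of nonempty open sets. For finite-dimensional `T`, the subspace
`W ⊔ T` is proper because `W` has infinite codimension, so it has empty interior and dense
complement. Hence one can choose recursively `d n ∈ U n` outside `W ⊔ G ⊔ span {d m | m < n}`.
The subspace `D = G ⊔ span (range d)` is dense because it meets every `U n`. The images of the
`d n` in `V ⧸ (W ⊔ G)` are linearly independent; this gives `dim D = ℵ₀`, and, together with
`G ⊓ W = ⊥` and modularity, `D ⊓ W = ⊥`.
-/

open Cardinal Set Submodule TopologicalSpace

section Algebra

variable {K M : Type*} [DivisionRing K] [AddCommGroup M] [Module K M]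

theorem linearIndependent_of_forall_notMem_span_image_Iio {v : ℕ → M}
    (h : ∀ n, v n ∉ span K (v '' Iio n)) : LinearIndependent K v := by
  have hIio : ∀ n, LinearIndepOn K v (Iio n) := by
    intro n
    induction n with
    | zero => simp
    | succ n ih =>
      rw [← Order.succ_eq_add_one, Order.Iio_succ_eq_insert]
      exact ih.insert (h n)
  rw [← linearIndepOn_univ_iff, ← iUnion_Iio]
  exact linearIndepOn_iUnion_of_directed monotone_Iio.directed_le hIio

theorem linearIndependent_mkQ_comp_of_forall_notMem_sup_span (p : Submodule K M) {v : ℕ → M}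
    (h : ∀ n, v n ∉ p ⊔ span K (v '' Iio n)) : LinearIndependent K (p.mkQ ∘ v) := by
  refine linearIndependent_of_forall_notMem_span_image_Iio fun n hn => h n ?_
  rwa [image_comp, ← map_span, Function.comp_apply, ← Submodule.mem_comap, comap_map_mkQ] at hn

theorem exists_seq_mem_forall_notMem_sup_span (p : Submodule K M) (s : ℕ → Set M)
    (h : ∀ n (T : Submodule K M), T.FG → ∃ x ∈ s n, x ∉ p ⊔ T) :
    ∃ v : ℕ → M, (∀ n, v n ∈ s n) ∧ ∀ n, v n ∉ p ⊔ span K (v '' Iio n) := by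
  classical
  choose f hf_mem hf_notMem using fun n (t : Finset M) => h n _ (fg_span t.finite_toSet)
  let t : ℕ → Finset M := fun n =>
    Nat.rec (motive := fun _ => Finset M) ∅ (fun n t => insert (f n t) t) n
  have ht : ∀ n, (t n : Set M) = (fun m => f m (t m)) '' Iio n := by
    intro n
    induction n with
    | zero => simp [t]
    | succ n ih =>
      rw [← Order.succ_eq_add_one, Order.Iio_succ_eq_insert, image_insert_eq, ← ih]
      exact Finset.coe_insert _ _
  exact ⟨fun n => f n (t n), fun n => hf_mem _ _, fun n => ht n ▸ hf_notMem _ _⟩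

theorem disjoint_sup_span_range_of_forall_notMem {W G : Submodule K M} (hWG : Disjoint W G)
    {v : ℕ → M} (hv : ∀ n, v n ∉ W ⊔ G ⊔ span K (v '' Iio n)) :
    Disjoint W (G ⊔ span K (range v)) := by
  have hspan :=
    range_ker_disjoint (linearIndependent_mkQ_comp_of_forall_notMem_sup_span _ hv)
  rw [ker_mkQ] at hspan
  exact hWG.disjoint_sup_right_of_disjoint_sup_left hspan.symm

theorem rank_sup_span_range_eq_aleph0 {G : Submodule K M} (hG : Module.rank K G < ℵ₀)
    {v : ℕ → M} (hv : LinearIndependent K v) :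
    Module.rank K ↥(G ⊔ span K (range v)) = ℵ₀ := by
  have hspan : Module.rank K (span K (range v)) = ℵ₀ := by
    rw [rank_span hv]
    simpa using mk_range_eq_of_injective hv.injective
  refine le_antisymm ?_ (hspan ▸ rank_mono le_sup_right)
  calc Module.rank K ↥(G ⊔ span K (range v))
      ≤ Module.rank K G + Module.rank K (span K (range v)) := rank_add_le_rank_add_rank _ _
    _ ≤ ℵ₀ := add_le_aleph0.mpr ⟨hG.le, hspan.le⟩

end Algebra

section Topology

theorem dense_compl_sup_of_fg {K M : Type*} [NontriviallyNormedField K] [AddCommGroup M]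
    [Module K M] [TopologicalSpace M] [ContinuousAdd M] [ContinuousSMul K M]
    {W T : Submodule K M} (hW : ℵ₀ ≤ Module.rank K (M ⧸ W)) (hT : T.FG) :
    Dense ((W ⊔ T : Submodule K M) : Set M)ᶜ := by
  have hne : W ⊔ T ≠ ⊤ := by
    intro htop
    have : Module.Finite K (M ⧸ W) := by
      rw [Module.finite_def, ← (map_mkQ_eq_top W T).mpr htop]
      exact hT.map _
    exact (Module.rank_lt_aleph0 K (M ⧸ W)).not_ge hW
  rw [← interior_eq_empty_iff_dense_compl, ← not_nonempty_iff_eq_empty]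
  exact fun hint => hne ((W ⊔ T).eq_top_of_nonempty_interior' hint)

theorem PseudoMetrizableSpace.secondCountableTopology_of_separable (X : Type*)
    [TopologicalSpace X] [PseudoMetrizableSpace X] [SeparableSpace X] :
    SecondCountableTopology X := by
  let := pseudoMetrizableSpaceUniformity X
  have := pseudoMetrizableSpaceUniformity_countably_generated X
  exact UniformSpace.secondCountable_of_separable X

theorem exists_seq_isOpen_nonempty_forall_denseRange (X : Type*) [TopologicalSpace X]
    [SecondCountableTopology X] [Nonempty X] :
    ∃ U : ℕ → Set X, (∀ n, IsOpen (U n) ∧ (U n).Nonempty) ∧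
      ∀ x : ℕ → X, (∀ n, x n ∈ U n) → DenseRange x := by
  obtain ⟨b, hbc, hb0, hb⟩ := exists_countable_basis X
  have hbne : b.Nonempty := by
    obtain ⟨o, ho, -⟩ :=
      hb.exists_subset_of_mem_open (mem_univ (Classical.arbitrary X)) isOpen_univ
    exact ⟨o, ho⟩
  obtain ⟨U, rfl⟩ := hbc.exists_eq_range hbne
  refine ⟨U, fun n => ⟨hb.isOpen ⟨n, rfl⟩, nonempty_iff_ne_empty.mpr fun h => hb0 ⟨n, h⟩⟩,
    ?_⟩
  intro x hx
  rw [DenseRange, hb.dense_iff]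
  rintro _ ⟨n, rfl⟩ -
  exact ⟨x n, hx n, n, rfl⟩

end Topology

/-- Theorem 4.3: if `V` is a metrizable separable topological vector space
and `W` is a subspace of infinite codimension, then `V \ W` is `(k, ℵ₀)`-dense lineable
for every `k ∈ ℕ`. -/
theorem stmt11 (V : Type*) [AddCommGroup V] [Module ℝ V] [TopologicalSpace V]
    [IsTopologicalAddGroup V] [ContinuousSMul ℝ V]
    [TopologicalSpace.MetrizableSpace V] [TopologicalSpace.SeparableSpace V]
    (W : Submodule ℝ V) (hcodim : Cardinal.aleph0 ≤ Module.rank ℝ (V ⧸ W))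
    (k : ℕ) (G : Submodule ℝ V) (hGdim : Module.rank ℝ G = k)
    (hG : (G : Set V) \ {0} ⊆ (W : Set V)ᶜ) :
    ∃ D : Submodule ℝ V, Module.rank ℝ D = Cardinal.aleph0 ∧ Dense (D : Set V) ∧
      G ≤ D ∧ (D : Set V) ⊆ (W : Set V)ᶜ ∪ {0} := by
  have := PseudoMetrizableSpace.secondCountableTopology_of_separable V
  obtain ⟨U, hU, hdense⟩ := exists_seq_isOpen_nonempty_forall_denseRange V
  have hGrank : Module.rank ℝ G < ℵ₀ := hGdim ▸ natCast_lt_aleph0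
  have hGfg : G.FG := Module.Finite.iff_fg.mp (Module.rank_lt_aleph0_iff.mp hGrank)
  obtain ⟨d, hdU, hd⟩ := exists_seq_mem_forall_notMem_sup_span (W ⊔ G) U fun n T hT => by
    rw [sup_assoc]
    exact (dense_compl_sup_of_fg hcodim (hGfg.sup hT)).inter_open_nonempty _ (hU n).1 (hU n).2
  have hWG : Disjoint W G :=
    disjoint_def.mpr fun x hxW hxG => by_contra fun hx0 => hG ⟨hxG, hx0⟩ hxW
  have hWD := disjoint_sup_span_range_of_forall_notMem hWG hd
  refine ⟨G ⊔ span ℝ (range d),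
    rank_sup_span_range_eq_aleph0 hGrank
      (linearIndependent_mkQ_comp_of_forall_notMem_sup_span _ hd).of_comp,
    (hdense d hdU).mono (subset_span.trans (SetLike.coe_subset_coe.mpr le_sup_right)),
    le_sup_left, fun x hx => ?_⟩
  by_cases hx0 : x = 0
  · exact Or.inr hx0
  · exact Or.inl fun hxW => hx0 (disjoint_def.mp hWD x hxW hx)
end

section
/- Let V be a metrizable separable topological vector space and W a proper subspace with dim(V/W) infinite. Then for every x ∈ V \ W there exists a dense linear subspace D of V of countably infinite dimension with x ∈ D and D ∩ W = {0}. (I.e., V \ W is pointwise ℵ₀-dense-lineable.) -/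
/-!
Take a countable basis of nonempty open sets `U₀, U₁, …` of `V` and points `zₙ ∈ Uₙ`. As `V ⧸ W`
is infinite-dimensional, there are pairwise distinct basis vectors `b (σ n)` of `V ⧸ W` with
`σ n` outside the supports of `x, z₀, …, zₙ`; lift them to `eₙ ∈ V` and put `dₙ = zₙ + tₙ • eₙ`
with `tₙ ≠ 0` so small that `dₙ ∈ Uₙ`. The coordinate `b.coord (σ n)` vanishes on the images of
`x, d₀, …, dₙ₋₁` but not on that of `dₙ`, so these images are linearly independent. Hence
`D = span {x, d₀, d₁, …}` has dimension `ℵ₀` and meets `W` trivially, and it is dense because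
`range d` meets every `Uₙ`.
-/

open Function Set TopologicalSpace Submodule Topology

theorem exists_injective_forall_notMem {ι : Type*} [Infinite ι] (F : ℕ → Finset ι) :
    ∃ σ : ℕ → ι, Injective σ ∧ ∀ n, σ n ∉ F n := by
  let e : ℕ × ℕ ↪ ι := Nat.pairEquiv.toEmbedding.trans (Infinite.natEmbedding ι)
  have (n : ℕ) : ∃ m, e (n, m) ∉ F n := by
    obtain ⟨m, hm⟩ := Infinite.exists_notMem_finset
      ((F n).preimage (fun m => e (n, m)) (e.injective.comp (Prod.mk_right_injective n)).injOn)
    exact ⟨m, by simpa using hm⟩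
  choose m hm using this
  exact ⟨fun n => e (n, m n), fun a b h => (Prod.ext_iff.mp (e.injective h)).1, hm⟩

theorem linearIndependent_of_triangular {R M ι : Type*} [Ring R] [NoZeroDivisors R]
    [AddCommGroup M] [Module R M] [LinearOrder ι] {v : ι → M} (f : ι → M →ₗ[R] R)
    (hdiag : ∀ i, f i (v i) ≠ 0) (hlt : ∀ i j, j < i → f i (v j) = 0) :
    LinearIndependent R v := by
  rw [linearIndependent_iff']
  intro s
  induction s using Finset.induction_on_max with
  | empty => simp
  | insert a s hlt_a ih =>
    intro g hsum
    have ha : g a = 0 := by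
      have := congr_arg (f a) hsum
      rw [Finset.sum_insert (fun h => lt_irrefl a (hlt_a a h)), map_add, map_sum,
        Finset.sum_eq_zero fun j hj => by rw [map_smul, hlt a j (hlt_a j hj), smul_zero],
        map_smul, add_zero, map_zero, smul_eq_mul] at this
      exact (mul_eq_zero.mp this).resolve_right (hdiag a)
    rw [Finset.sum_insert (fun h => lt_irrefl a (hlt_a a h)), ha, zero_smul, zero_add] at hsum
    intro i hi
    rcases Finset.mem_insert.mp hi with rfl | hi
    · exact ha
    · exact ih g hsum i hi

theorem exists_linearIndependent_withBot_add_smul {K Q : Type*} [Field K] [AddCommGroup Q]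
    [Module K Q] (hQ : Cardinal.aleph0 ≤ Module.rank K Q) {y : Q} (hy : y ≠ 0) (w : ℕ → Q) :
    ∃ u : ℕ → Q, ∀ t : ℕ → K, (∀ n, t n ≠ 0) →
      LinearIndependent K fun i : WithBot ℕ => (i.recBotCoe y fun n => w n + t n • u n : Q) := by
  classical
  let b := Module.Basis.ofVectorSpace K Q
  have : Infinite (Module.Basis.ofVectorSpaceIndex K Q) := by
    rw [Cardinal.infinite_iff, b.mk_eq_rank'']
    exact hQ
  obtain ⟨i₀, hi₀⟩ : ∃ i, b.repr y i ≠ 0 := by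
    by_contra! h
    exact hy (b.repr.injective (Finsupp.ext fun i => by simp [h]))
  obtain ⟨σ, hσ, hσF⟩ := exists_injective_forall_notMem fun n =>
    (b.repr y).support ∪ (Finset.range (n + 1)).biUnion fun k => (b.repr (w k)).support
  have hy₀ (n : ℕ) : b.repr y (σ n) = 0 :=
    Finsupp.notMem_support_iff.mp fun h => hσF n (Finset.mem_union_left _ h)
  have hw₀ {k n : ℕ} (hkn : k ≤ n) : b.repr (w k) (σ n) = 0 :=
    Finsupp.notMem_support_iff.mp fun h => hσF n (Finset.mem_union_right _
      (Finset.mem_biUnion.mpr ⟨k, Finset.mem_range.mpr (Nat.lt_succ_of_le hkn), h⟩))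
  refine ⟨fun n => b (σ n), fun t ht => linearIndependent_of_triangular
    (fun i => (i.recBotCoe (b.coord i₀) fun n => b.coord (σ n) : Q →ₗ[K] K)) ?_ ?_⟩
  · intro i
    cases i with
    | bot => simpa using hi₀
    | coe n => simpa [hw₀ le_rfl] using ht n
  · intro i j hji
    cases i with
    | bot => exact absurd hji not_lt_bot
    | coe n =>
      cases j with
      | bot => simpa using hy₀ n
      | coe k =>
        have hkn : k < n := WithBot.coe_lt_coe.mp hji
        simp [hw₀ hkn.le, hσ.eq_iff, hkn.ne]

theorem exists_seq_isOpen_nonempty_dense_range_of_mem (X : Type*) [TopologicalSpace X]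
    [SecondCountableTopology X] [Nonempty X] :
    ∃ U : ℕ → Set X, (∀ n, IsOpen (U n) ∧ (U n).Nonempty) ∧
      ∀ d : ℕ → X, (∀ n, d n ∈ U n) → Dense (range d) := by
  obtain ⟨B, hBc, hB, hBasis⟩ := exists_countable_basis X
  have hBne : B.Nonempty := by
    obtain ⟨s, hs, -⟩ := nonempty_sUnion.mp (hBasis.sUnion_eq ▸ univ_nonempty)
    exact ⟨s, hs⟩
  obtain ⟨U, rfl⟩ := hBc.exists_eq_range hBne
  refine ⟨U, fun n => ⟨hBasis.isOpen ⟨n, rfl⟩, nonempty_iff_ne_empty.mpr fun h => hB ⟨n, h⟩⟩,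
    fun d hd => hBasis.dense_iff.mpr ?_⟩
  rintro _ ⟨n, rfl⟩ -
  exact ⟨d n, hd n, n, rfl⟩

theorem exists_ne_zero_add_smul_mem {𝕜 V : Type*} [NontriviallyNormedField 𝕜] [AddCommGroup V]
    [Module 𝕜 V] [TopologicalSpace V] [ContinuousAdd V] [ContinuousSMul 𝕜 V] {U : Set V}
    (hU : IsOpen U) {z : V} (hz : z ∈ U) (e : V) : ∃ t : 𝕜, t ≠ 0 ∧ z + t • e ∈ U := by
  have hcont : Continuous fun t : 𝕜 => z + t • e := by fun_prop
  have hnhds : ∀ᶠ t in 𝓝 (0 : 𝕜), z + t • e ∈ U :=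
    hcont.continuousAt.preimage_mem_nhds (by simpa using hU.mem_nhds hz)
  have hne : ∀ᶠ t in 𝓝[≠] (0 : 𝕜), t ≠ 0 := self_mem_nhdsWithin
  exact (hne.and (hnhds.filter_mono nhdsWithin_le_nhds)).exists

theorem stmt12_general (V : Type*) [AddCommGroup V] [Module ℝ V] [TopologicalSpace V]
    [IsTopologicalAddGroup V] [ContinuousSMul ℝ V]
    [TopologicalSpace.MetrizableSpace V] [TopologicalSpace.SeparableSpace V]
    (W : Submodule ℝ V)
    (hcodim : Cardinal.aleph0 ≤ Module.rank ℝ (V ⧸ W))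
    (x : V) (hx : x ∉ W) :
    ∃ D : Submodule ℝ V, Module.rank ℝ D = Cardinal.aleph0 ∧ Dense (D : Set V) ∧
      x ∈ D ∧ D ⊓ W = ⊥ := by
  have : SecondCountableTopology V := by
    let := metrizableSpaceMetric V
    infer_instance
  obtain ⟨U, hU, hdense⟩ := exists_seq_isOpen_nonempty_dense_range_of_mem V
  choose z hz using fun n => (hU n).2
  obtain ⟨u, hu⟩ := exists_linearIndependent_withBot_add_smul hcodim
    (y := W.mkQ x) (by simpa using hx) (W.mkQ ∘ z)
  choose e he using fun n => W.mkQ_surjective (u n)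
  choose t ht htU using fun n => exists_ne_zero_add_smul_mem (𝕜 := ℝ) (hU n).1 (hz n) (e n)
  let v (i : WithBot ℕ) : V := i.recBotCoe x fun n => z n + t n • e n
  have hmkQv : W.mkQ ∘ v = fun i : WithBot ℕ =>
      (i.recBotCoe (W.mkQ x) fun n => W.mkQ (z n) + t n • u n : V ⧸ W) := by
    funext i
    cases i <;> simp [v, ← he]
  have hv : LinearIndependent ℝ (W.mkQ ∘ v) := hmkQv ▸ hu t ht
  have hvli := hv.of_comp
  refine ⟨span ℝ (range v), ?_, ?_, subset_span ⟨⊥, rfl⟩, ?_⟩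
  · have := (countable_range v).to_subtype
    have := (infinite_range_of_injective hvli.injective).to_subtype
    rw [rank_span hvli, Cardinal.mk_eq_aleph0]
  · refine (hdense _ htU).mono ?_
    rintro _ ⟨n, rfl⟩
    exact subset_span ⟨n, rfl⟩
  · simpa [disjoint_iff] using range_ker_disjoint hv

/-- Remark 5.2: if `V` is a metrizable separable topological vector space
and `W` is a proper subspace of infinite codimension, then `V \ W` is pointwise
`ℵ₀`-dense-lineable. -/
theorem stmt12 (V : Type*) [AddCommGroup V] [Module ℝ V] [TopologicalSpace V]
    [IsTopologicalAddGroup V] [ContinuousSMul ℝ V]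
    [TopologicalSpace.MetrizableSpace V] [TopologicalSpace.SeparableSpace V]
    (W : Submodule ℝ V) (hW : W ≠ ⊤)
    (hcodim : Cardinal.aleph0 ≤ Module.rank ℝ (V ⧸ W))
    (x : V) (hx : x ∉ W) :
    ∃ D : Submodule ℝ V, Module.rank ℝ D = Cardinal.aleph0 ∧ Dense (D : Set V) ∧
      x ∈ D ∧ D ⊓ W = ⊥ :=
  stmt12_general V W hcodim x hx
end

section
/- Let V be an infinite-dimensional separable metrizable topological vector space and W a dense subspace of V. If V \ W is (m, dim V)-lineable for some m ∈ ℕ, then V \ W is pointwise maximal dense-lineable: for every v ∈ V \ W there exists a dense linear subspace S of V of dimension dim V with v ∈ S and S ∩ W = {0}. -/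
/-!
A full-rank subspace `Y₀` with `Y₀ ∩ W = 0` meets `W + ℝ v` in dimension at most one; keeping a
complement of that intersection inside `Y₀` and adjoining `v` gives a full-rank `Y ∋ v` with
`Y ∩ W = 0`. That condition says that a basis of `Y` stays linearly independent modulo `W`, which
survives replacing countably many basis vectors `b i` by `w + ε • b i` with `w ∈ W`, `ε ≠ 0`.
Since `W` is dense and `V` is second countable, one such replacement can be put into every set of
a countable basis of the topology, and then the span of the new basis is dense.
-/

open Cardinal Set Submodule TopologicalSpace Function

theorem Cardinal.le_of_le_add_of_lt_aleph0 {a b c : Cardinal} (h : c ≤ a + b) (ha : a < ℵ₀)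
    (hc : ℵ₀ ≤ c) : c ≤ b := by
  have hb : ℵ₀ ≤ b := by
    by_contra! hb
    exact (add_lt_aleph0 ha hb).not_ge (hc.trans h)
  rwa [add_eq_right hb (ha.le.trans hb)] at h

theorem LinearIndependent.of_forall_eq_units_smul {ι R M : Type*} [Semiring R] [AddCommMonoid M]
    [Module R M] {f g : ι → M} (hf : LinearIndependent R f) (h : ∀ i, ∃ c : Rˣ, g i = c • f i) :
    LinearIndependent R g := by
  choose c hc using h
  rw [show g = c • f from funext hc]
  exact hf.units_smul c

theorem exists_injective_notMem_range (α : Type*) {β : Type*} [Countable α] [Infinite β]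
    (b : β) : ∃ e : α → β, Injective e ∧ b ∉ range e := by
  have : Infinite ({b}ᶜ : Set β) := (finite_singleton b).infinite_compl.to_subtype
  obtain ⟨n, hn⟩ := Countable.exists_injective_nat α
  let emb := Infinite.natEmbedding ({b}ᶜ : Set β)
  exact ⟨fun a => emb (n a), fun _ _ h => hn (emb.injective (Subtype.ext h)),
    fun ⟨a, h⟩ => (emb (n a)).2 h⟩

namespace Submodule

section Ring

variable {R V : Type*} [Ring R] [AddCommGroup V] [Module R V]

theorem disjoint_of_subset_compl_union_zero {Y W : Submodule R V}
    (h : (Y : Set V) ⊆ (W : Set V)ᶜ ∪ {0}) : Disjoint Y W :=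
  disjoint_def.2 fun _ hxY hxW => (h hxY).resolve_left (not_not.2 hxW)

theorem injective_mkQ_comp_subtype {P W : Submodule R V} (h : Disjoint P W) :
    Injective (W.mkQ ∘ₗ P.subtype) := by
  rw [← LinearMap.ker_eq_bot, LinearMap.ker_comp, ker_mkQ, ← disjoint_iff_comap_eq_bot]
  exact h

theorem rank_le_of_disjoint_of_le_sup {P W A : Submodule R V} (hPW : Disjoint P W)
    (hle : P ≤ W ⊔ A) : Module.rank R P ≤ Module.rank R A := by
  have hrange : LinearMap.range (W.mkQ ∘ₗ P.subtype) ≤ A.map W.mkQ := by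
    rw [LinearMap.range_comp, range_subtype]
    calc P.map W.mkQ ≤ (W ⊔ A).map W.mkQ := map_mono hle
      _ = A.map W.mkQ := by rw [map_sup, mkQ_map_self, bot_sup_eq]
  calc Module.rank R P = Module.rank R (LinearMap.range (W.mkQ ∘ₗ P.subtype)) :=
        (rank_range_of_injective _ (injective_mkQ_comp_subtype hPW)).symm
    _ ≤ Module.rank R (A.map W.mkQ) := rank_mono hrange
    _ ≤ Module.rank R A := rank_map_le _ _

end Ring

variable {K V : Type*} [DivisionRing K] [AddCommGroup V] [Module K V]

theorem exists_disjoint_mem_rank_le {Y₀ W : Submodule K V} (hY₀W : Disjoint Y₀ W)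
    (hY₀ : ℵ₀ ≤ Module.rank K Y₀) {v : V} (hv : v ∉ W) :
    ∃ Y : Submodule K V, Disjoint Y W ∧ v ∈ Y ∧ Module.rank K Y₀ ≤ Module.rank K Y := by
  set P := Y₀ ⊓ (W ⊔ K ∙ v)
  have hP : Module.rank K P < ℵ₀ :=
    calc Module.rank K P ≤ Module.rank K (K ∙ v) :=
          rank_le_of_disjoint_of_le_sup (hY₀W.mono_left inf_le_left) inf_le_right
      _ ≤ #({v} : Set V) := rank_span_le _
      _ < ℵ₀ := by rw [mk_singleton]; exact one_lt_aleph0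
  obtain ⟨Q', hQ'⟩ := exists_isCompl P
  set Q := Q' ⊓ Y₀
  have hPQ : P ⊔ Q = Y₀ := by
    rw [← sup_inf_assoc_of_le _ inf_le_left, hQ'.sup_eq_top, top_inf_eq]
  have hQ : Disjoint (W ⊔ K ∙ v) Q := by
    rw [disjoint_iff_inf_le]
    calc (W ⊔ K ∙ v) ⊓ Q ≤ P ⊓ Q' :=
          le_inf (le_inf (inf_le_right.trans inf_le_right) inf_le_left)
            (inf_le_right.trans inf_le_left)
      _ ≤ ⊥ := hQ'.disjoint.le_bot
  have hWv : Disjoint W (K ∙ v) :=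
    (disjoint_span_singleton' (ne_of_mem_of_not_mem W.zero_mem hv).symm).2 hv
  refine ⟨(K ∙ v) ⊔ Q, (hWv.disjoint_sup_right_of_disjoint_sup_left hQ).symm,
    mem_sup_left (mem_span_singleton_self v), ?_⟩
  calc Module.rank K Y₀ ≤ Module.rank K Q := by
        refine le_of_le_add_of_lt_aleph0 ?_ hP hY₀
        rw [← hPQ]
        exact rank_add_le_rank_add_rank P Q
    _ ≤ Module.rank K ↥((K ∙ v) ⊔ Q) := rank_mono le_sup_right

end Submodule

section Topology

variable {𝕜 V : Type*} [NontriviallyNormedField 𝕜] [AddCommGroup V] [Module 𝕜 V]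
  [TopologicalSpace V] [ContinuousAdd V] [ContinuousSMul 𝕜 V]

theorem IsOpen.exists_ne_zero_add_smul_mem {U : Set V} (hU : IsOpen U) {w : V} (hw : w ∈ U)
    (x : V) : ∃ ε : 𝕜, ε ≠ 0 ∧ w + ε • x ∈ U := by
  have hcont : Continuous fun t : 𝕜 => w + t • x := by fun_prop
  have hU0 : (fun t : 𝕜 => w + t • x) ⁻¹' U ∈ nhds 0 :=
    hcont.continuousAt.preimage_mem_nhds (by simpa using hU.mem_nhds hw)
  have hnear : ∀ᶠ t in nhdsWithin (0 : 𝕜) {0}ᶜ, w + t • x ∈ U := mem_nhdsWithin_of_mem_nhds hU0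
  obtain ⟨t, ht, ht0⟩ := (hnear.and self_mem_nhdsWithin).exists
  exact ⟨t, ht0, ht⟩

theorem Submodule.exists_dense_range_mkQ_eq_units_smul {W : Submodule 𝕜 V}
    (hW : Dense (W : Set V)) {ι : Type*} (f : ι → V) {B : Set (Set V)} (hB : IsTopologicalBasis B)
    (hB₀ : ∅ ∉ B) {e : B → ι} (he : Injective e) :
    ∃ g : ι → V, Dense (range g) ∧ (∀ i, ∃ c : 𝕜ˣ, W.mkQ (g i) = c • W.mkQ (f i)) ∧
      ∀ i ∉ range e, g i = f i := by
  have hw (o : B) : ∃ w ∈ W, w ∈ (o : Set V) :=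
    hW.exists_mem_open (hB.isOpen o.2) (nonempty_iff_ne_empty.2 fun h => hB₀ (h ▸ o.2))
  choose w hwW hwo using hw
  have hε (o : B) := (hB.isOpen o.2).exists_ne_zero_add_smul_mem (𝕜 := 𝕜) (hwo o) (f (e o))
  choose ε hε0 hεo using hε
  refine ⟨extend e (fun o => w o + ε o • f (e o)) f, ?_, fun i => ?_,
    fun i hi => extend_apply' _ _ _ hi⟩
  · refine hB.dense_iff.2 fun o ho _ => ⟨_, ?_, mem_range_self (e ⟨o, ho⟩)⟩
    rw [he.extend_apply]
    exact hεo ⟨o, ho⟩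
  · by_cases hi : i ∈ range e
    · obtain ⟨o, rfl⟩ := hi
      refine ⟨Units.mk0 (ε o) (hε0 o), ?_⟩
      have hw0 : W.mkQ (w o) = 0 := (Quotient.mk_eq_zero W).2 (hwW o)
      rw [he.extend_apply, map_add, hw0, zero_add, map_smul, Units.smul_mk0]
    · exact ⟨1, by rw [extend_apply' _ _ _ hi, one_smul]⟩

theorem Submodule.exists_dense_disjoint_rank_eq [SecondCountableTopology V] {W Y : Submodule 𝕜 V}
    (hW : Dense (W : Set V)) (hYW : Disjoint Y W) (hY : ℵ₀ ≤ Module.rank 𝕜 Y) {v : V}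
    (hvY : v ∈ Y) (hv : v ≠ 0) :
    ∃ S : Submodule 𝕜 V, Dense (S : Set V) ∧ Module.rank 𝕜 S = Module.rank 𝕜 Y ∧ v ∈ S ∧
      Disjoint S W := by
  set y : Y := ⟨v, hvY⟩
  have hy : LinearIndepOn 𝕜 id {y} := .singleton (by simpa [y] using hv)
  set s := hy.extend (subset_univ _)
  set b : Module.Basis s 𝕜 Y := .extend hy
  set i₀ : s := ⟨y, hy.subset_extend _ rfl⟩
  have hbi₀ : (b i₀ : V) = v := congrArg Subtype.val (Module.Basis.extend_apply_self hy i₀)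
  have hs : #s = Module.rank 𝕜 Y := b.mk_eq_rank''
  have : Infinite s := by
    rw [Cardinal.infinite_iff, hs]
    exact hY
  obtain ⟨B, hBc, hB₀, hB⟩ := exists_countable_basis V
  have : Countable B := hBc.to_subtype
  obtain ⟨e, he, hi₀⟩ := exists_injective_notMem_range B i₀
  obtain ⟨g, hgd, hgf, hg⟩ :=
    exists_dense_range_mkQ_eq_units_smul hW (fun i => (b i : V)) hB hB₀ he
  have hbq : LinearIndependent 𝕜 (W.mkQ ∘ fun i => (b i : V)) :=
    b.linearIndependent.map' _ (LinearMap.ker_eq_bot.2 (injective_mkQ_comp_subtype hYW))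
  have hgq : LinearIndependent 𝕜 (W.mkQ ∘ g) := hbq.of_forall_eq_units_smul hgf
  have hg_ind : LinearIndependent 𝕜 g := hgq.of_comp _
  refine ⟨span 𝕜 (range g), hgd.mono subset_span, ?_, ?_, ?_⟩
  · rw [rank_span hg_ind, mk_range_eq _ hg_ind.injective, hs]
  · rw [← hbi₀, ← hg i₀ hi₀]
    exact subset_span (mem_range_self _)
  · simpa using range_ker_disjoint hgq

end Topology

/-- Theorem 5.3: let `V` be an infinite-dimensional separable metrizable
topological vector space and `W` a dense subspace. If `V \ W` is `(m, dim V)`-lineable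
for some `m ∈ ℕ`, then `V \ W` is pointwise maximal dense-lineable. -/
theorem stmt14 (V : Type*) [AddCommGroup V] [Module ℝ V] [TopologicalSpace V]
    [IsTopologicalAddGroup V] [ContinuousSMul ℝ V]
    [TopologicalSpace.MetrizableSpace V] [TopologicalSpace.SeparableSpace V]
    (hinf : Cardinal.aleph0 ≤ Module.rank ℝ V)
    (W : Submodule ℝ V) (hWdense : Dense (W : Set V))
    (hlin : ∃ m : ℕ,
      (∃ E : Submodule ℝ V, Module.rank ℝ E = m ∧ (E : Set V) ⊆ (W : Set V)ᶜ ∪ {0}) ∧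
      ∀ E : Submodule ℝ V, Module.rank ℝ E = m → (E : Set V) ⊆ (W : Set V)ᶜ ∪ {0} →
        ∃ Y : Submodule ℝ V, Module.rank ℝ Y = Module.rank ℝ V ∧ E ≤ Y ∧
          (Y : Set V) ⊆ (W : Set V)ᶜ ∪ {0})
    (v : V) (hv : v ∉ W) :
    ∃ S : Submodule ℝ V, Dense (S : Set V) ∧ Module.rank ℝ S = Module.rank ℝ V ∧
      v ∈ S ∧ S ⊓ W = ⊥ := by
  obtain ⟨m, ⟨E, hE, hEW⟩, hext⟩ := hlin
  obtain ⟨Y₀, hY₀, -, hY₀W⟩ := hext E hE hEW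
  obtain ⟨Y, hYW, hvY, hY₀Y⟩ :=
    exists_disjoint_mem_rank_le (disjoint_of_subset_compl_union_zero hY₀W) (hY₀ ▸ hinf) hv
  have hY : Module.rank ℝ Y = Module.rank ℝ V := le_antisymm (rank_le Y) (hY₀ ▸ hY₀Y)
  let := pseudoMetrizableSpacePseudoMetric V
  have : SecondCountableTopology V := UniformSpace.secondCountable_of_separable V
  obtain ⟨S, hSd, hS, hvS, hSW⟩ := exists_dense_disjoint_rank_eq hWdense hYW (hY ▸ hinf) hvY
    (ne_of_mem_of_not_mem W.zero_mem hv).symm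
  exact ⟨S, hSd, hS.trans hY, hvS, disjoint_iff.1 hSW⟩
end

section
/- For every p > 0, the set L_p[0,1] \ ⋃_{q>p} L_q[0,1] is not (α, β)-spaceable in L_p[0,1] for any infinite cardinal α ≤ 𝔠 and any cardinal β: there exists an α-dimensional subspace M of L_p[0,1] with M \ {0} disjoint from ⋃_{q>p} L_q[0,1] whose closure contains a nonzero function belonging to some L_q[0,1] with q > p. -/
/-!
Let `h(y) = (y log² y)^(-1/p)` for `0 < y ≤ e⁻¹` and `h = 0` elsewhere. Then
`h^p = 1/(y log² y)` is integrable at `0`, while for `q > p` the power `h^q` dominates `1/y` near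
`0`. Take `T ⊆ (0,1)` of cardinality `α` accumulating at `1` and let `M` be spanned by the
functions `1 + h(· - t)`, `t ∈ T`. In a nontrivial linear combination, the spike at the leftmost
`t` with nonzero coefficient is the only one alive just to the right of `t`, so the combination is
not in any `L_q`, `q > p`; in particular the family is linearly independent. As `t → 1` the
spike leaves `[0,1]`, so its `L_p` norm there tends to `0` and `1 + h(· - t) → 1`, a function in
every `L_q`.
-/

open MeasureTheory Filter Topology
open scoped ENNReal

open Set Real

noncomputable def singularProfile (P y : ℝ) : ℝ :=
  if y ∈ Ioc 0 (exp (-1)) then (y * log y ^ 2) ^ (-P⁻¹) else 0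

namespace singularProfile

variable {P Q y : ℝ}

lemma nonneg (P y : ℝ) : 0 ≤ singularProfile P y := by
  unfold singularProfile
  split_ifs with hy
  · exact rpow_nonneg (mul_nonneg hy.1.le (sq_nonneg _)) _
  · exact le_rfl

lemma eq_zero_of_nonpos (hy : y ≤ 0) : singularProfile P y = 0 :=
  if_neg fun h => h.1.not_ge hy

lemma measurable (P : ℝ) : Measurable (singularProfile P) :=
  Measurable.ite measurableSet_Ioc (by fun_prop) measurable_const

lemma rpow_eq_indicator (hQ : 0 < Q) :
    singularProfile P y ^ Q =
      (Ioc 0 (exp (-1))).indicator (fun y => (y * log y ^ 2) ^ (-(Q / P))) y := by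
  unfold singularProfile indicator
  split_ifs with hy
  · rw [← rpow_mul (mul_nonneg hy.1.le (sq_nonneg _))]
    ring_nf
  · exact zero_rpow hQ.ne'

end singularProfile

lemma integrableOn_inv_mul_log_sq :
    IntegrableOn (fun y => (y * log y ^ 2)⁻¹) (Ioc 0 (exp (-1))) := by
  have hcont : ContinuousOn (fun y => -(log y)⁻¹) (Icc 0 (exp (-1))) := by
    intro y hy
    rcases hy.1.eq_or_lt with rfl | hy0
    · refine (continuousWithinAt_compl_self.1 ?_).continuousWithinAt
      simpa [ContinuousWithinAt] using tendsto_log_nhdsNE_zero.inv_tendsto_atBot.neg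
    · have hlog : log y ≠ 0 := ((log_le_iff_le_exp hy0).2 hy.2).trans_lt (by norm_num) |>.ne
      exact ((continuousAt_log hy0.ne').inv₀ hlog).neg.continuousWithinAt
  refine intervalIntegral.integrableOn_deriv_of_nonneg hcont (fun y hy => ?_)
    (fun y hy => by have := hy.1; positivity)
  have hy1 : y < 1 := hy.2.trans (exp_lt_one_iff.2 (by norm_num))
  exact (hasDerivAt_inv_log hy.1.ne' hy1.ne (by linarith [hy.1])).neg.congr_deriv
    (by rw [neg_div, neg_neg, mul_inv, div_eq_mul_inv])

lemma mul_log_sq_eq_rpow_mul_sq {y : ℝ} (hy : 0 < y) (s : ℝ) :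
    y * log y ^ 2 = y ^ s⁻¹ * (log y * y ^ ((1 - s⁻¹) / 2)) ^ 2 := by
  have hexp : s⁻¹ + (1 - s⁻¹) / 2 * ((2 : ℕ) : ℝ) = 1 := by push_cast; ring
  rw [mul_pow, ← rpow_natCast (y ^ _), ← rpow_mul hy.le, mul_left_comm, ← rpow_add hy, hexp,
    rpow_one, mul_comm]

lemma not_integrableOn_mul_log_sq_rpow_neg {s ε : ℝ} (hs : 1 < s) (hε : 0 < ε) :
    ¬ IntegrableOn (fun y => (y * log y ^ 2) ^ (-s)) (Ioc 0 ε) := by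
  have hr : 0 < (1 - s⁻¹) / 2 := by
    have := inv_lt_one_of_one_lt₀ hs
    linarith
  have hsmall : ∀ᶠ y in 𝓝[>] 0, |log y * y ^ ((1 - s⁻¹) / 2)| ≤ 1 ∧ y < min ε 1 :=
    ((tendsto_log_mul_rpow_nhdsGT_zero hr).norm.eventually (eventually_le_nhds (by simp))).and
      ((eventually_lt_nhds (lt_min hε one_pos)).filter_mono nhdsWithin_le_nhds)
  obtain ⟨η, hη, hsub⟩ := mem_nhdsGT_iff_exists_Ioo_subset.1 hsmall
  have hbound : ∀ y ∈ Ioo 0 η, y ^ (-1 : ℝ) ≤ (y * log y ^ 2) ^ (-s) := by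
    intro y hy
    obtain ⟨hlog, hy_lt⟩ := hsub hy
    have hy0 : 0 < y := hy.1
    have hpos : 0 < y * log y ^ 2 :=
      mul_pos hy0 (sq_pos_of_neg (log_neg hy0 (hy_lt.trans_le (min_le_right _ _))))
    have hle : y * log y ^ 2 ≤ y ^ s⁻¹ := by
      rw [mul_log_sq_eq_rpow_mul_sq hy0 s]
      exact mul_le_of_le_one_right (by positivity) (sq_le_one_iff_abs_le_one _ |>.2 hlog)
    calc y ^ (-1 : ℝ) = (y ^ s⁻¹) ^ (-s) := by
          rw [← rpow_mul hy0.le, inv_mul_eq_div, neg_div, div_self (by positivity)]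
      _ ≤ (y * log y ^ 2) ^ (-s) := rpow_le_rpow_of_nonpos hpos hle (by linarith)
  intro hint
  have hinv : IntegrableOn (fun y : ℝ => y ^ (-1 : ℝ)) (Ioo 0 η) := by
    have hsub' : Ioo 0 η ⊆ Ioc 0 ε := fun y hy =>
      ⟨hy.1, ((hsub hy).2.trans_le (min_le_left _ _)).le⟩
    refine (hint.mono_set hsub').mono' (by fun_prop)
      ((ae_restrict_iff' measurableSet_Ioo).2 (ae_of_all _ fun y hy => ?_))
    rw [norm_of_nonneg (rpow_nonneg hy.1.le _)]
    exact hbound y hy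
  exact lt_irrefl _ ((intervalIntegral.integrableOn_Ioo_rpow_iff hη).1 hinv)

namespace singularProfile

variable {p q : ℝ≥0∞}

lemma memLp (hp : p ≠ 0) (hp' : p ≠ ⊤) : MemLp (singularProfile p.toReal) p volume := by
  have hP : 0 < p.toReal := ENNReal.toReal_pos hp hp'
  rw [← integrable_norm_rpow_iff (measurable _).aestronglyMeasurable hp hp']
  simp_rw [norm_of_nonneg (nonneg _ _), rpow_eq_indicator hP, div_self hP.ne', rpow_neg_one]
  exact (integrable_indicator_iff measurableSet_Ioc).2 integrableOn_inv_mul_log_sq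

lemma not_memLp_restrict_Ioc (hp : p ≠ 0) (hpq : p < q) (hq : q ≠ ⊤) {ε : ℝ}
    (hε : 0 < ε) :
    ¬ MemLp (singularProfile p.toReal) q (volume.restrict (Ioc 0 ε)) := by
  intro h
  have hP : 0 < p.toReal := ENNReal.toReal_pos hp hpq.ne_top
  have hPQ : p.toReal < q.toReal := (ENNReal.toReal_lt_toReal hpq.ne_top hq).2 hpq
  have hint := h.integrable_norm_rpow (zero_le.trans_lt hpq).ne' hq
  simp_rw [norm_of_nonneg (nonneg _ _), rpow_eq_indicator (hP.trans hPQ)] at hint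
  rw [integrable_indicator_iff measurableSet_Ioc, IntegrableOn,
    Measure.restrict_restrict measurableSet_Ioc, Ioc_inter_Ioc, sup_idem] at hint
  exact not_integrableOn_mul_log_sq_rpow_neg ((one_lt_div hP).2 hPQ) (lt_min (exp_pos _) hε) hint

end singularProfile

section Translation

variable {E : Type*} [NormedAddCommGroup E] {g : ℝ → E} {p : ℝ≥0∞}

lemma MeasureTheory.MemLp.of_comp_sub_restrict_Ioc {t a b : ℝ}
    (hg : MemLp (fun x => g (x - t)) p (volume.restrict (Ioc a b))) :
    MemLp g p (volume.restrict (Ioc (a - t) (b - t))) := by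
  have hshift := (measurePreserving_add_right volume t).restrict_preimage (s := Ioc a b)
    measurableSet_Ioc
  rw [preimage_add_const_Ioc] at hshift
  simpa [Function.comp_def] using hg.comp_measurePreserving hshift

lemma eLpNorm_comp_sub_restrict_Icc_le (hg : AEStronglyMeasurable g volume)
    (hg0 : ∀ y ≤ 0, g y = 0) (t a b : ℝ) :
    eLpNorm (fun x => g (x - t)) p (volume.restrict (Icc a b)) ≤
      eLpNorm g p (volume.restrict (Ioc 0 (b - t))) := by
  have hshift := (measurePreserving_sub_right volume t).restrict_preimage
    (s := Icc (a - t) (b - t)) measurableSet_Icc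
  rw [preimage_sub_const_Icc, sub_add_cancel, sub_add_cancel] at hshift
  have hsupp : g.support ⊆ Ioi 0 := fun y hy => not_le.1 fun h => hy (hg0 y h)
  calc eLpNorm (fun x => g (x - t)) p (volume.restrict (Icc a b))
      = eLpNorm g p (volume.restrict (Icc (a - t) (b - t))) :=
        eLpNorm_comp_measurePreserving hg.restrict hshift
    _ = eLpNorm g p (volume.restrict (Ioi 0 ∩ Icc (a - t) (b - t))) := by
        rw [← Measure.restrict_restrict measurableSet_Ioi,
          eLpNorm_restrict_eq_of_support_subset hsupp]
    _ ≤ eLpNorm g p (volume.restrict (Ioc 0 (b - t))) :=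
        eLpNorm_mono_measure _ <| Measure.restrict_mono
          (show Ioi 0 ∩ Icc (a - t) (b - t) ⊆ Ioc 0 (b - t) from fun y hy => ⟨hy.1, hy.2.2⟩)
          le_rfl

end Translation

lemma MeasureTheory.MemLp.tendsto_eLpNorm_restrict {α E ι : Type*} [MeasurableSpace α]
    [NormedAddCommGroup E] {μ : Measure α} {f : α → E} {p : ℝ≥0∞} (hf : MemLp f p μ)
    (hp : p ≠ ⊤) {l : Filter ι} {s : ι → Set α} (hs : Tendsto (μ ∘ s) l (𝓝 0)) :
    Tendsto (fun i => eLpNorm f p (μ.restrict (s i))) l (𝓝 0) := by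
  rcases eq_or_ne p 0 with rfl | hp0
  · simpa using tendsto_const_nhds
  simp_rw [eLpNorm_eq_lintegral_rpow_enorm_toReal hp0 hp]
  have hP : 0 < 1 / p.toReal := one_div_pos.2 (ENNReal.toReal_pos hp0 hp)
  have hlim := ((ENNReal.continuous_rpow_const (y := 1 / p.toReal)).tendsto 0).comp
    (tendsto_setLIntegral_zero (lintegral_rpow_enorm_lt_top_of_eLpNorm_lt_top hp0 hp hf.2).ne hs)
  rwa [ENNReal.zero_rpow_of_pos hP] at hlim

lemma exists_subset_Ioo_mk_eq_and_tendsto_one {α : Cardinal} (hα : Cardinal.aleph0 ≤ α)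
    (hα' : α ≤ Cardinal.continuum) :
    ∃ T ⊆ Ioo (0 : ℝ) 1, Cardinal.mk T = α ∧
      ∃ t : ℕ → T, Tendsto (fun n => (t n : ℝ)) atTop (𝓝 1) := by
  obtain ⟨S, hS, hSα⟩ := Cardinal.le_mk_iff_exists_subset.1
    (hα'.trans_eq (Cardinal.mk_Ioo_real zero_lt_one).symm)
  set s : ℕ → ℝ := fun n => 1 - 1 / ((n : ℝ) + 2)
  have hs : ∀ n, s n ∈ Ioo (0 : ℝ) 1 := fun n => by
    have h2 : (1 : ℝ) < (n : ℝ) + 2 := by linarith [n.cast_nonneg (α := ℝ)]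
    constructor
    · linarith [(div_lt_one (by linarith)).2 h2]
    · linarith [one_div_pos.2 (by linarith : (0 : ℝ) < (n : ℝ) + 2)]
  refine ⟨S ∪ range s, union_subset hS (range_subset_iff.2 hs), le_antisymm ?_ ?_,
    fun n => ⟨s n, Or.inr ⟨n, rfl⟩⟩, ?_⟩
  · calc Cardinal.mk ↥(S ∪ range s) ≤ Cardinal.mk S + Cardinal.mk (range s) :=
          Cardinal.mk_union_le _ _
      _ ≤ α + Cardinal.aleph0 := add_le_add hSα.le (countable_range s).le_aleph0
      _ = α := Cardinal.add_eq_left hα hα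
  · exact hSα ▸ Cardinal.mk_le_mk_of_subset subset_union_left
  · have h := (tendsto_one_div_add_atTop_nhds_zero_nat (𝕜 := ℝ)).comp
      (tendsto_add_atTop_nat 1)
    simpa [s, Function.comp_def, add_assoc, one_add_one_eq_two] using
      (tendsto_const_nhds (x := (1 : ℝ))).sub h

noncomputable def spikeFamily (P : ℝ) (T : Set ℝ) (t : T) : ℝ → ℝ :=
  1 + fun x => singularProfile P (x - t)

namespace spikeFamily

variable {P : ℝ} {T : Set ℝ} {p q : ℝ≥0∞}

lemma sub_one (t : T) : spikeFamily P T t - 1 = fun x => singularProfile P (x - t) := by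
  funext x
  simp [spikeFamily]

lemma linearCombination_eventuallyEq (c : T →₀ ℝ) {t₀ : T}
    (ht₀ : ∀ t ∈ c.support, t₀ ≤ t) :
    ∀ᶠ x in 𝓝[>] (t₀ : ℝ), Finsupp.linearCombination ℝ (spikeFamily P T) c x =
      (c.sum fun _ a => a) + c t₀ * singularProfile P (x - t₀) := by
  have hright : ∀ᶠ x in 𝓝[>] (t₀ : ℝ), ∀ t ∈ c.support.erase t₀, x < (t : ℝ) :=
    (eventually_all_finset _).2 fun t ht =>
      have hlt : t₀ < t :=
        (ht₀ t (Finset.mem_of_mem_erase ht)).lt_of_ne (Finset.ne_of_mem_erase ht).symm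
      (eventually_lt_nhds (Subtype.coe_lt_coe.2 hlt)).filter_mono nhdsWithin_le_nhds
  filter_upwards [hright] with x hx
  simp only [Finsupp.linearCombination_apply, Finsupp.sum, Finset.sum_apply, Pi.smul_apply,
    smul_eq_mul, spikeFamily, Pi.add_apply, Pi.one_apply, mul_add, mul_one,
    Finset.sum_add_distrib]
  congr 1
  refine Finset.sum_eq_single t₀ (fun t ht htne => ?_) (fun ht => ?_)
  · have hxt : x - t ≤ 0 := sub_nonpos.2 (hx t (Finset.mem_erase.2 ⟨htne, ht⟩)).le
    rw [singularProfile.eq_zero_of_nonpos hxt, mul_zero]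
  · rw [Finsupp.notMem_support_iff.1 ht, zero_mul]

lemma not_memLp_linearCombination (hT : T ⊆ Ico 0 1) (hp : p ≠ 0) (hpq : p < q) (hq : q ≠ ⊤)
    {c : T →₀ ℝ} (hc : c ≠ 0) :
    ¬ MemLp (Finsupp.linearCombination ℝ (spikeFamily p.toReal T) c) q
      (volume.restrict (Icc 0 1)) := by
  set t₀ := c.support.min' (Finsupp.support_nonempty_iff.2 hc)
  have hct₀ : c t₀ ≠ 0 := Finsupp.mem_support_iff.1 (Finset.min'_mem _ _)
  obtain ⟨u, hu, hsub⟩ := mem_nhdsGT_iff_exists_Ioc_subset.1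
    ((linearCombination_eventuallyEq c fun t ht => Finset.min'_le _ t ht).and
      ((eventually_lt_nhds (hT t₀.2).2).filter_mono nhdsWithin_le_nhds))
  have hI : Ioc (t₀ : ℝ) u ⊆ Icc 0 1 := fun x hx =>
    ⟨(hT t₀.2).1.trans hx.1.le, (hsub hx).2.le⟩
  intro hf
  have hshift : MemLp (fun x => singularProfile p.toReal (x - t₀)) q
      (volume.restrict (Ioc t₀ u)) := by
    refine (((hf.mono_measure (Measure.restrict_mono hI le_rfl)).sub
      (memLp_const (c.sum fun _ a => a))).const_mul (c t₀)⁻¹).ae_eq ?_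
    filter_upwards [self_mem_ae_restrict measurableSet_Ioc] with x hx
    rw [Pi.sub_apply, (hsub hx).1]
    field_simp
    ring
  exact singularProfile.not_memLp_restrict_Ioc hp hpq hq (sub_pos.2 hu)
    (by simpa using hshift.of_comp_sub_restrict_Ioc)

lemma linearIndependent (hT : T ⊆ Ico 0 1) (hp : p ≠ 0) (hp' : p ≠ ⊤) :
    LinearIndependent ℝ (spikeFamily p.toReal T) :=
  linearIndependent_iff.2 fun _ hc => by_contra fun hc0 =>
    not_memLp_linearCombination hT hp (ENNReal.lt_add_right hp' one_ne_zero)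
      (ENNReal.add_ne_top.2 ⟨hp', ENNReal.one_ne_top⟩) hc0 (hc ▸ MemLp.zero)

lemma not_memLp_of_mem_span (hT : T ⊆ Ico 0 1) (hp : p ≠ 0) (hpq : p < q) (hq : q ≠ ⊤)
    {f : ℝ → ℝ} (hf : f ∈ Submodule.span ℝ (range (spikeFamily p.toReal T)))
    (hf0 : f ≠ 0) :
    ¬ MemLp f q (volume.restrict (Icc 0 1)) := by
  rw [← Finsupp.range_linearCombination] at hf
  obtain ⟨c, rfl⟩ := hf
  exact not_memLp_linearCombination hT hp hpq hq (by rintro rfl; exact hf0 (map_zero _))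

lemma memLp_of_mem_span (hp : p ≠ 0) (hp' : p ≠ ⊤) {f : ℝ → ℝ}
    (hf : f ∈ Submodule.span ℝ (range (spikeFamily p.toReal T))) :
    MemLp f p (volume.restrict (Icc 0 1)) := by
  induction hf using Submodule.span_induction with
  | mem f hf =>
    obtain ⟨t, rfl⟩ := hf
    have hshift : MemLp (fun x => singularProfile p.toReal (x - t)) p volume :=
      (singularProfile.memLp hp hp').comp_measurePreserving
        (measurePreserving_sub_right volume _)
    exact (memLp_const (1 : ℝ)).add (hshift.restrict _)
  | zero => exact MemLp.zero
  | add f g _ _ hf hg => exact hf.add hg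
  | smul a f _ hf => exact hf.const_smul a

lemma tendsto_eLpNorm_sub_one (hp : p ≠ 0) (hp' : p ≠ ⊤) {ι : Type*} {l : Filter ι}
    {t : ι → T} (ht : Tendsto (fun i => (t i : ℝ)) l (𝓝 1)) :
    Tendsto (fun i => eLpNorm (spikeFamily p.toReal T (t i) - 1) p (volume.restrict (Icc 0 1)))
      l (𝓝 0) := by
  have hvol : Tendsto (volume ∘ fun i => Ioc (0 : ℝ) (1 - t i)) l (𝓝 0) := by
    have := ENNReal.tendsto_ofReal (by simpa using (tendsto_const_nhds (x := (1 : ℝ))).sub ht)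
    rw [ENNReal.ofReal_zero] at this
    simpa [Function.comp_def] using this
  refine tendsto_of_tendsto_of_tendsto_of_le_of_le tendsto_const_nhds
    ((singularProfile.memLp hp hp').tendsto_eLpNorm_restrict hp' hvol) (fun _ => zero_le)
    fun i => ?_
  rw [sub_one]
  exact eLpNorm_comp_sub_restrict_Icc_le (singularProfile.measurable _).aestronglyMeasurable
    (fun _ => singularProfile.eq_zero_of_nonpos) _ _ _

end spikeFamily

/-- for every `p > 0`, the set `L_p[0,1] \ ⋃_{q > p} L_q[0,1]` is not
`(α, β)`-spaceable in `L_p[0,1]` for any infinite `α ≤ 𝔠`: there is an `α`-dimensional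
subspace `M` of `L_p[0,1]` whose nonzero elements lie in no `L_q[0,1]` with `q > p`, and
whose closure (in the `L_p`-topology, expressed via `eLpNorm`-convergence of sequences)
contains a nonzero function belonging to some `L_q[0,1]`, `q > p`. -/
theorem stmt15 (p : ℝ≥0∞) (hp : 0 < p) (hp' : p ≠ ⊤)
    (α : Cardinal) (hα : Cardinal.aleph0 ≤ α) (hα' : α ≤ Cardinal.continuum) :
    ∃ M : Submodule ℝ (ℝ → ℝ), Module.rank ℝ M = α ∧
      (∀ f ∈ M, MemLp f p (volume.restrict (Set.Icc (0:ℝ) 1))) ∧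
      (∀ f ∈ M, f ≠ 0 → ∀ q : ℝ≥0∞, p < q → q ≠ ⊤ →
        ¬ MemLp f q (volume.restrict (Set.Icc (0:ℝ) 1))) ∧
      ∃ g : ℝ → ℝ, MemLp g p (volume.restrict (Set.Icc (0:ℝ) 1)) ∧
        ¬ (g =ᵐ[volume.restrict (Set.Icc (0:ℝ) 1)] 0) ∧
        (∃ q : ℝ≥0∞, p < q ∧ q ≠ ⊤ ∧ MemLp g q (volume.restrict (Set.Icc (0:ℝ) 1))) ∧
        ∃ F : ℕ → (ℝ → ℝ), (∀ n, F n ∈ M) ∧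
          Tendsto (fun n => eLpNorm (F n - g) p (volume.restrict (Set.Icc (0:ℝ) 1)))
            atTop (𝓝 0) := by
  obtain ⟨T, hT, hTα, t, ht⟩ := exists_subset_Ioo_mk_eq_and_tendsto_one hα hα'
  have hT' : T ⊆ Ico 0 1 := hT.trans Ioo_subset_Ico_self
  have hli := spikeFamily.linearIndependent hT' hp.ne' hp'
  refine ⟨Submodule.span ℝ (range (spikeFamily p.toReal T)), ?_,
    fun f hf => spikeFamily.memLp_of_mem_span hp.ne' hp' hf,
    fun f hf hf0 q hpq hq => spikeFamily.not_memLp_of_mem_span hT' hp.ne' hpq hq hf hf0,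
    1, memLp_const 1, ?_,
    ⟨p + 1, ENNReal.lt_add_right hp' one_ne_zero,
      ENNReal.add_ne_top.2 ⟨hp', ENNReal.one_ne_top⟩, memLp_const 1⟩,
    fun n => spikeFamily p.toReal T (t n), fun n => Submodule.subset_span ⟨t n, rfl⟩,
    spikeFamily.tendsto_eLpNorm_sub_one hp.ne' hp' ht⟩
  · rw [rank_span hli, Cardinal.mk_range_eq _ hli.injective, hTα]
  · simp only [EventuallyEq, Pi.one_apply, Pi.zero_apply, one_ne_zero,
      eventually_false_iff_eq_bot, ae_eq_bot, Measure.restrict_eq_zero, Real.volume_Icc]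
    norm_num
end

section
/- For every n ∈ ℕ, the set ℓ∞ \ c₀ is (n, ℵ₀)-lineable but not (n, ℵ₀)-dense lineable; the failure of dense lineability follows because every dense linear subspace of ℓ∞ has dimension 𝔠. -/
/-!
The quotient `ℓ∞ ⧸ c₀` is infinite-dimensional: the indicators of the columns of `ℕ ≃ ℕ × ℕ` are
independent modulo `c₀`. So a finite-dimensional subspace `W` meeting `c₀` only in `0` can be
enlarged by countably many vectors that are independent modulo `c₀ ⊔ W`, and the sum still meets
`c₀` only in `0`.

If `b` is a Hamel basis of a subspace `D`, the rational combinations of `b` are dense in `D` and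
there are at most `max #b ℵ₀` of them. The indicators of subsets of `ℕ` are `𝔠` points of `ℓ∞` at
mutual distance `1`, so every dense subset of `ℓ∞` has at least `𝔠` elements; hence every dense
subspace has dimension at least `𝔠`, and at most `#ℓ∞ = 𝔠`. In particular none has dimension `ℵ₀`.
-/

open Filter Topology

/-- `A` is `(α, β)`-lineable. -/
def IsABLineable (K V : Type*) [Field K] [AddCommGroup V] [Module K V]
    (A : Set V) (α β : Cardinal) : Prop :=
  (∃ W : Submodule K V, Module.rank K W = α ∧ (W : Set V) ⊆ A ∪ {0}) ∧
  ∀ W : Submodule K V, Module.rank K W = α → (W : Set V) ⊆ A ∪ {0} →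
    ∃ Z : Submodule K V, Module.rank K Z = β ∧ W ≤ Z ∧ (Z : Set V) ⊆ A ∪ {0}

/-- `A` is `(α, β)`-dense lineable: the extending `β`-dimensional subspace can be
chosen dense. -/
def IsABDenseLineable (K V : Type*) [Field K] [AddCommGroup V] [Module K V]
    [TopologicalSpace V] (A : Set V) (α β : Cardinal) : Prop :=
  (∃ W : Submodule K V, Module.rank K W = α ∧ (W : Set V) ⊆ A ∪ {0}) ∧
  ∀ W : Submodule K V, Module.rank K W = α → (W : Set V) ⊆ A ∪ {0} →
    ∃ Z : Submodule K V, Dense (Z : Set V) ∧ Module.rank K Z = β ∧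
      W ≤ Z ∧ (Z : Set V) ⊆ A ∪ {0}

open Cardinal Submodule

universe u v

section Lineability

variable {K V : Type*} [DivisionRing K] [AddCommGroup V] [Module K V]

theorem Submodule.coe_subset_compl_union_zero_iff_disjoint {W C : Submodule K V} :
    (W : Set V) ⊆ (C : Set V)ᶜ ∪ {0} ↔ Disjoint W C := by
  rw [Submodule.disjoint_def]
  refine ⟨fun h x hxW hxC => ?_, fun h x hxW => ?_⟩
  · simpa [hxC] using h hxW
  · by_cases hxC : x ∈ C
    · exact Or.inr (h x hxW hxC)
    · exact Or.inl hxC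

theorem Submodule.exists_rank_eq_disjoint_of_linearIndependent {ι : Type*} {C : Submodule K V}
    {u : ι → V ⧸ C} (hu : LinearIndependent K u) :
    ∃ S : Submodule K V, Module.rank K S = #(Set.range u) ∧ Disjoint S C := by
  set v := Function.surjInv C.mkQ_surjective ∘ u
  have hv : LinearIndependent K (C.mkQ ∘ v) := by
    rwa [← Function.comp_assoc, (Function.rightInverse_surjInv _).comp_eq_id]
  refine ⟨span K (Set.range v), ?_, by simpa using Submodule.range_ker_disjoint hv⟩
  rw [rank_span (hv.of_comp _), Set.range_comp, mk_image_eq (Function.injective_surjInv _)]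

theorem exists_linearIndependent_nat_of_aleph0_le_rank {M : Type*} [AddCommGroup M] [Module K M]
    (h : ℵ₀ ≤ Module.rank K M) : ∃ u : ℕ → M, LinearIndependent K u := by
  obtain ⟨s, hs, hind⟩ := le_rank_iff_exists_linearIndependent.mp h
  obtain ⟨_⟩ := denumerable_iff.mpr hs
  exact ⟨(↑) ∘ (Denumerable.eqv s).symm, hind.linearIndependent.comp _ (Equiv.injective _)⟩

theorem Submodule.exists_rank_eq_natCast_disjoint {C : Submodule K V} {n : ℕ}
    (hC : n ≤ Module.rank K (V ⧸ C)) : ∃ W : Submodule K V, Module.rank K W = n ∧ Disjoint W C := by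
  obtain ⟨u, hu⟩ := exists_linearIndependent_of_le_rank hC
  obtain ⟨W, hW, hWC⟩ := exists_rank_eq_disjoint_of_linearIndependent hu
  exact ⟨W, by simpa [hW] using mk_range_eq_of_injective hu.injective, hWC⟩

theorem Submodule.aleph0_le_rank_quotient_sup {C W : Submodule K V}
    (hC : ℵ₀ ≤ Module.rank K (V ⧸ C)) (hW : Module.rank K W < ℵ₀) :
    ℵ₀ ≤ Module.rank K (V ⧸ C ⊔ W) := by
  rw [← (quotientQuotientEquivQuotientSup C W).rank_eq]
  by_contra! h
  have hsum := rank_quotient_add_rank_of_divisionRing (W.map C.mkQ)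
  exact (add_lt_aleph0 h ((rank_map_le _ W).trans_lt hW)).not_ge (hsum ▸ hC)

theorem Submodule.exists_le_rank_eq_aleph0_disjoint {C W : Submodule K V}
    (hC : ℵ₀ ≤ Module.rank K (V ⧸ C)) (hW : Module.rank K W < ℵ₀) (hWC : Disjoint W C) :
    ∃ Z : Submodule K V, Module.rank K Z = ℵ₀ ∧ W ≤ Z ∧ Disjoint Z C := by
  obtain ⟨u, hu⟩ :=
    exists_linearIndependent_nat_of_aleph0_le_rank (aleph0_le_rank_quotient_sup hC hW)
  obtain ⟨S, hS, hSCW⟩ := exists_rank_eq_disjoint_of_linearIndependent hu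
  replace hS : Module.rank K S = ℵ₀ := by simpa [hS] using mk_range_eq_of_injective hu.injective
  refine ⟨S ⊔ W, le_antisymm ?_ (hS ▸ Submodule.rank_mono le_sup_left), le_sup_right,
    hWC.disjoint_sup_left_of_disjoint_sup_right (sup_comm C W ▸ hSCW)⟩
  calc Module.rank K ↥(S ⊔ W) ≤ Module.rank K S + Module.rank K W := rank_add_le_rank_add_rank _ _
    _ ≤ ℵ₀ := by rw [hS]; exact add_le_aleph0.mpr ⟨le_rfl, hW.le⟩

end Lineability

section RationalCombinations

variable {E : Type*} [AddCommGroup E] [Module ℝ E]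

def ratCombinations (s : Set E) : Set E :=
  Set.range fun l : s →₀ ℚ => l.sum fun x q => (q : ℝ) • (x : E)

theorem mk_ratCombinations_le (s : Set E) : #(ratCombinations s) ≤ max #s ℵ₀ := by
  refine mk_range_le.trans ?_
  rcases isEmpty_or_nonempty s with hs | hs
  · exact (mk_le_aleph0).trans (le_max_right _ _)
  · simp

theorem subset_ratCombinations (s : Set E) : s ⊆ ratCombinations s :=
  fun x hx => ⟨Finsupp.single ⟨x, hx⟩ 1, by simp⟩

theorem zero_mem_ratCombinations (s : Set E) : 0 ∈ ratCombinations s :=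
  ⟨0, Finsupp.sum_zero_index⟩

theorem add_mem_ratCombinations {s : Set E} {x y : E} (hx : x ∈ ratCombinations s)
    (hy : y ∈ ratCombinations s) : x + y ∈ ratCombinations s := by
  obtain ⟨l, rfl⟩ := hx
  obtain ⟨l', rfl⟩ := hy
  exact ⟨l + l', Finsupp.sum_add_index' (by simp) (by simp [add_smul])⟩

theorem ratCast_smul_mem_ratCombinations {s : Set E} (q : ℚ) {x : E}
    (hx : x ∈ ratCombinations s) : (q : ℝ) • x ∈ ratCombinations s := by
  obtain ⟨l, rfl⟩ := hx
  exact ⟨q • l, by simp [Finsupp.sum_smul_index, Finsupp.smul_sum, mul_smul]⟩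

variable [TopologicalSpace E] [ContinuousSMul ℝ E]

theorem smul_mem_closure_of_ratCast_smul_mem {T : Set E} (hT : ∀ q : ℚ, ∀ x ∈ T, (q : ℝ) • x ∈ T)
    (r : ℝ) {x : E} (hx : x ∈ closure T) : r • x ∈ closure T :=
  Rat.denseRange_cast.induction_on r
    (isClosed_closure.preimage (continuous_id.smul continuous_const))
    fun q => map_mem_closure (continuous_const_smul _) hx (hT q)

theorem span_subset_closure_ratCombinations [ContinuousAdd E] (s : Set E) :
    (span ℝ s : Set E) ⊆ closure (ratCombinations s) := by
  intro x hx
  induction hx using Submodule.span_induction with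
  | mem x hx => exact subset_closure (subset_ratCombinations s hx)
  | zero => exact subset_closure (zero_mem_ratCombinations s)
  | add x y _ _ hx hy =>
    exact map_mem_closure₂ continuous_add hx hy (fun _ ha _ hb => add_mem_ratCombinations ha hb)
  | smul r x _ hx =>
    exact smul_mem_closure_of_ratCast_smul_mem (fun q _ => ratCast_smul_mem_ratCombinations q) r hx

theorem le_rank_of_dense [ContinuousAdd E] {κ : Cardinal} (hκ : ℵ₀ < κ)
    (hE : ∀ T : Set E, Dense T → κ ≤ #T) {D : Submodule ℝ E} (hD : Dense (D : Set E)) :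
    κ ≤ Module.rank ℝ D := by
  obtain ⟨b, -, hspan, hb⟩ := exists_linearIndependent ℝ (D : Set E)
  obtain rfl : span ℝ b = D := hspan.trans D.span_eq
  have hT := hE _ (dense_closure.mp (hD.mono (span_subset_closure_ratCombinations b)))
  rw [rank_span_set hb]
  exact (le_max_iff.mp (hT.trans (mk_ratCombinations_le b))).resolve_right hκ.not_ge

end RationalCombinations

theorem Dense.lift_mk_le_of_pairwise_le_dist {X : Type u} {ι : Type v} [PseudoMetricSpace X]
    {T : Set X} (hT : Dense T) {f : ι → X} {ε : ℝ} (hε : 0 < ε)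
    (hf : Pairwise fun i j => ε ≤ dist (f i) (f j)) : lift.{u} #ι ≤ lift.{v} #T := by
  choose t htT ht using fun i => hT.exists_dist_lt (f i) (half_pos hε)
  refine lift_mk_le_lift_mk_of_injective (f := fun i => (⟨t i, htT i⟩ : T)) fun i j hij => ?_
  by_contra hne
  have htij : t i = t j := congrArg Subtype.val hij
  refine lt_irrefl ε ?_
  calc ε ≤ dist (f i) (f j) := hf hne
    _ ≤ dist (f i) (t i) + dist (f j) (t i) := dist_triangle_right _ _ _
    _ = dist (f i) (t i) + dist (f j) (t j) := by rw [htij]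
    _ < ε / 2 + ε / 2 := add_lt_add (ht i) (ht j)
    _ = ε := add_halves ε

namespace EllInfty

noncomputable def indicator (s : Set ℕ) : EllInfty :=
  ⟨s.indicator 1, memℓp_infty ⟨1, by
    rintro _ ⟨m, rfl⟩
    by_cases hm : m ∈ s <;> simp [hm]⟩⟩

theorem indicator_apply (s : Set ℕ) (m : ℕ) : indicator s m = s.indicator 1 m := rfl

theorem one_le_norm_indicator_sub {s t : Set ℕ} (h : s ≠ t) :
    1 ≤ ‖indicator s - indicator t‖ := by
  obtain ⟨m, hm⟩ : ∃ m, ¬(m ∈ s ↔ m ∈ t) := by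
    by_contra! h'
    exact h (Set.ext h')
  refine le_trans ?_ (lp.norm_apply_le_norm ENNReal.top_ne_zero _ m)
  by_cases hs : m ∈ s <;> by_cases ht : m ∈ t <;> simp_all [indicator_apply]

def natColumn (k : ℕ) : Set ℕ := {m | (Nat.unpair m).1 = k}

theorem linearIndependent_mkQ_indicator_natColumn :
    LinearIndependent ℝ (fun k => cZero.mkQ (indicator (natColumn k))) := by
  rw [linearIndependent_iff]
  intro l hl
  set x := Finsupp.linearCombination ℝ (fun k => indicator (natColumn k)) l
  have hx : x ∈ cZero := by
    rwa [← Submodule.Quotient.mk_eq_zero, ← mkQ_apply, Finsupp.apply_linearCombination]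
  have hcol : ∀ k j, x (Nat.pair k j) = l k := by
    intro k j
    rw [← lp.evalₗ_apply (𝕜 := ℝ), Finsupp.apply_linearCombination, Finsupp.linearCombination_apply]
    simp [indicator_apply, natColumn, Set.indicator_apply, eq_comm]
  ext k
  have hk : Tendsto (fun j => x (Nat.pair k j)) atTop (𝓝 0) :=
    hx.comp (tendsto_atTop_mono (Nat.right_le_pair k) tendsto_id)
  simp only [hcol] at hk
  exact tendsto_nhds_unique tendsto_const_nhds hk

theorem continuum_le_mk_of_dense {T : Set EllInfty} (hT : Dense T) : 𝔠 ≤ #T := by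
  have := hT.lift_mk_le_of_pairwise_le_dist one_pos fun s t hst =>
    (dist_eq_norm (indicator s) (indicator t)).symm ▸ one_le_norm_indicator_sub hst
  simpa using this

theorem rank_le_continuum (D : Submodule ℝ EllInfty) : Module.rank ℝ D ≤ 𝔠 :=
  calc Module.rank ℝ D ≤ #D := rank_le_card ℝ D
    _ ≤ #(ℕ → ℝ) := mk_le_of_injective (Subtype.val_injective.comp Subtype.val_injective)
    _ = 𝔠 := by simp [mk_real, continuum_power_aleph0]

theorem rank_eq_continuum_of_dense {D : Submodule ℝ EllInfty} (hD : Dense (D : Set EllInfty)) :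
    Module.rank ℝ D = 𝔠 :=
  (rank_le_continuum D).antisymm
    (le_rank_of_dense aleph0_lt_continuum (fun _ => continuum_le_mk_of_dense) hD)

theorem aleph0_le_rank_quotient_cZero : ℵ₀ ≤ Module.rank ℝ (EllInfty ⧸ cZero) :=
  linearIndependent_mkQ_indicator_natColumn.aleph0_le_rank

end EllInfty

theorem stmt17_general (n : ℕ) :
    (∀ D : Submodule ℝ EllInfty, Dense (D : Set EllInfty) →
      Module.rank ℝ D = Cardinal.continuum) ∧
    IsABLineable ℝ EllInfty ((cZero : Set EllInfty)ᶜ) n Cardinal.aleph0 ∧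
    ¬ IsABDenseLineable ℝ EllInfty ((cZero : Set EllInfty)ᶜ) n Cardinal.aleph0 := by
  have hC := EllInfty.aleph0_le_rank_quotient_cZero
  obtain ⟨W₀, hW₀, hW₀C⟩ :=
    exists_rank_eq_natCast_disjoint ((natCast_lt_aleph0 (n := n)).le.trans hC)
  refine ⟨fun D hD => EllInfty.rank_eq_continuum_of_dense hD,
    ⟨⟨W₀, hW₀, coe_subset_compl_union_zero_iff_disjoint.mpr hW₀C⟩, fun W hW hWC => ?_⟩, ?_⟩
  · obtain ⟨Z, hZ, hWZ, hZC⟩ := exists_le_rank_eq_aleph0_disjoint hC (hW ▸ natCast_lt_aleph0)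
      (coe_subset_compl_union_zero_iff_disjoint.mp hWC)
    exact ⟨Z, hZ, hWZ, coe_subset_compl_union_zero_iff_disjoint.mpr hZC⟩
  · rintro ⟨-, hdense⟩
    obtain ⟨Z, hZdense, hZ, -⟩ :=
      hdense W₀ hW₀ (coe_subset_compl_union_zero_iff_disjoint.mpr hW₀C)
    exact aleph0_lt_continuum.ne (hZ.symm.trans (EllInfty.rank_eq_continuum_of_dense hZdense))

/-- for every `n ∈ ℕ`, `ℓ∞ \ c₀` is `(n, ℵ₀)`-lineable, but not
`(n, ℵ₀)`-dense lineable, since every dense subspace of `ℓ∞` has dimension `𝔠`. -/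
theorem stmt17 (n : ℕ) (hn : 0 < n) :
    (∀ D : Submodule ℝ EllInfty, Dense (D : Set EllInfty) →
      Module.rank ℝ D = Cardinal.continuum) ∧
    IsABLineable ℝ EllInfty ((cZero : Set EllInfty)ᶜ) n Cardinal.aleph0 ∧
    ¬ IsABDenseLineable ℝ EllInfty ((cZero : Set EllInfty)ᶜ) n Cardinal.aleph0 :=
  stmt17_general n
end

section
/- Let V be a topological vector space whose topology comes from a translation-invariant metric, and let A, B ⊆ V with A + B ⊆ A, A ∩ B = ∅, B containing a line ℝv \ {0} for some v ≠ 0, and A containing E \ {0} for an infinite-dimensional subspace E with basis {v_a}. Then the vectors u_a = t_a v_a + v (for suitable nonzero scalars t_a) are linearly independent, span a subspace M with M \ {0} ⊆ A, and v lies in the closure of M. -/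
/-!
Since `A ∩ B = ∅`, the vector `v` is not in `E = span (v_a)`. Hence for nonzero `t_a` the
vectors `u_a = t_a v_a + v` are independent, and a nonzero element of their span has the form
`w + s v` with `w ∈ E`, where `w = 0` forces `s = 0`: it lies in `E \ {0} ⊆ A` or in `A + B ⊆ A`.
Choosing `t_a` so small along a sequence `a_n` that `t_{a_n} v_{a_n} → 0` gives `u_{a_n} → v`.
-/

open Filter Topology

open scoped Pointwise

section Algebra

variable {K V ι : Type*} [Field K] [AddCommGroup V] [Module K V]

theorem Finsupp.linearCombination_add_const (w : ι → V) (v : V) (c : ι →₀ K) :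
    Finsupp.linearCombination K (fun a => w a + v) c =
      Finsupp.linearCombination K w c + (c.sum fun _ r => r) • v := by
  simp only [Finsupp.linearCombination_apply, smul_add, Finsupp.sum_add]
  simp only [Finsupp.sum, Finset.sum_smul]

theorem LinearIndependent.add_const {w : ι → V} (hw : LinearIndependent K w) {v : V}
    (hv : v ∉ Submodule.span K (Set.range w)) :
    LinearIndependent K (fun a => w a + v) := by
  rw [linearIndependent_iff]
  intro c hc
  rw [Finsupp.linearCombination_add_const] at hc
  have hsum : (c.sum fun _ r => r) = 0 := by
    by_contra hne
    refine hv ?_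
    have hv_eq : v = -(c.sum fun _ r => r)⁻¹ • Finsupp.linearCombination K w c := by
      rw [neg_smul, eq_neg_iff_add_eq_zero, ← inv_smul_smul₀ hne v, ← smul_add, add_comm, hc,
        smul_zero]
    rw [hv_eq]
    exact Submodule.smul_mem _ _ (Finsupp.mem_span_range_iff_exists_finsupp.mpr ⟨c, rfl⟩)
  rw [hsum, zero_smul, add_zero] at hc
  exact linearIndependent_iff.mp hw c hc

theorem span_range_add_const_diff_zero_subset {w : ι → V} (hw : LinearIndependent K w) {v : V}
    {A B : Set V} (hAddB : A + B ⊆ A) (hA : (Submodule.span K (Set.range w) : Set V) \ {0} ⊆ A)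
    (hB : ∀ c : K, c ≠ 0 → c • v ∈ B) :
    (Submodule.span K (Set.range fun a => w a + v) : Set V) \ {0} ⊆ A := by
  rintro x ⟨hx, hx0 : x ≠ 0⟩
  obtain ⟨c, rfl⟩ := Finsupp.mem_span_range_iff_exists_finsupp.mp hx
  rw [← Finsupp.linearCombination_apply, Finsupp.linearCombination_add_const] at hx0 ⊢
  set y := Finsupp.linearCombination K w c
  set s := c.sum fun _ r => r
  have hy : y ∈ Submodule.span K (Set.range w) :=
    Finsupp.mem_span_range_iff_exists_finsupp.mpr ⟨c, rfl⟩
  by_cases hs : s = 0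
  · rw [hs, zero_smul, add_zero] at hx0 ⊢
    exact hA ⟨hy, hx0⟩
  · have hy0 : y ≠ 0 := by
      intro hy0
      refine hs ?_
      simp [s, linearIndependent_iff.mp hw c hy0]
    exact hAddB (Set.add_mem_add (hA ⟨hy, hy0⟩) (hB s hs))

end Algebra

section Topology

variable {𝕜 V ι : Type*} [NontriviallyNormedField 𝕜] [AddCommGroup V] [Module 𝕜 V]
  [TopologicalSpace V] [ContinuousSMul 𝕜 V]

theorem exists_ne_zero_smul_mem (x : V) {U : Set V} (hU : U ∈ 𝓝 0) :
    ∃ c : 𝕜, c ≠ 0 ∧ c • x ∈ U := by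
  have hsmul : Tendsto (fun c : 𝕜 => c • x) (𝓝[≠] 0) (𝓝 0) :=
    ((continuous_id.smul continuous_const).tendsto' 0 0 (zero_smul 𝕜 x)).mono_left
      nhdsWithin_le_nhds
  exact (eventually_mem_nhdsWithin.and (hsmul.eventually hU)).exists

theorem exists_ne_zero_tendsto_smul_zero [(𝓝 (0 : V)).IsCountablyGenerated] (e : ℕ ↪ ι)
    (x : ι → V) :
    ∃ t : ι → 𝕜, (∀ a, t a ≠ 0) ∧ Tendsto (fun n => t (e n) • x (e n)) atTop (𝓝 0) := by
  obtain ⟨U, hU⟩ := (𝓝 (0 : V)).exists_antitone_basis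
  choose t ht0 htU using fun a =>
    exists_ne_zero_smul_mem (𝕜 := 𝕜) (x a) (hU.mem (Function.invFun e a))
  refine ⟨t, ht0, hU.tendsto fun n => ?_⟩
  simpa only [Function.leftInverse_invFun e.injective n] using htU (e n)

end Topology

theorem stmt19_general (V : Type*) [AddCommGroup V] [Module ℝ V] [MetricSpace V]
    [ContinuousAdd V] [ContinuousSMul ℝ V]
    (A B : Set V) (hstr : A + B ⊆ A) (hAB : A ∩ B = ∅)
    (v : V) (hv : v ≠ 0) (hB : ∀ c : ℝ, c ≠ 0 → c • v ∈ B)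
    (ι : Type*) [Infinite ι] (va : ι → V) (hind : LinearIndependent ℝ va)
    (hA : (Submodule.span ℝ (Set.range va) : Set V) \ {0} ⊆ A) :
    ∃ t : ι → ℝ, (∀ a, t a ≠ 0) ∧
      LinearIndependent ℝ (fun a => t a • va a + v) ∧
      (Submodule.span ℝ (Set.range (fun a => t a • va a + v)) : Set V) \ {0} ⊆ A ∧
      v ∈ closure (Submodule.span ℝ (Set.range (fun a => t a • va a + v)) : Set V) := by
  have hv_notMem : v ∉ Submodule.span ℝ (Set.range va) := fun hmem =>
    hAB.subset ⟨hA ⟨hmem, hv⟩, by simpa using hB 1 one_ne_zero⟩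
  let e := Infinite.natEmbedding ι
  obtain ⟨t, ht0, htend⟩ := exists_ne_zero_tendsto_smul_zero (𝕜 := ℝ) e va
  have hw : LinearIndependent ℝ (fun a => t a • va a) :=
    hind.units_smul fun a => Units.mk0 (t a) (ht0 a)
  have hspan : Submodule.span ℝ (Set.range fun a => t a • va a) ≤
      Submodule.span ℝ (Set.range va) :=
    Submodule.span_le.mpr <| Set.range_subset_iff.mpr fun a =>
      Submodule.smul_mem _ _ (Submodule.subset_span ⟨a, rfl⟩)
  refine ⟨t, ht0, hw.add_const (mt (@hspan v) hv_notMem),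
    span_range_add_const_diff_zero_subset hw hstr
      (Set.sdiff_subset_sdiff_left hspan |>.trans hA) hB, ?_⟩
  exact mem_closure_of_tendsto (by simpa using htend.add_const v)
    (Eventually.of_forall fun n => Submodule.subset_span ⟨e n, rfl⟩)

/-- core construction in Theorem 2.1: in a topological vector space whose
topology comes from a translation-invariant metric, given `A + B ⊆ A`, `A ∩ B = ∅`, a
line through `v ≠ 0` inside `B ∪ {0}`, and an infinite linearly independent family
`(v_a)` whose span minus `{0}` lies in `A`, there are nonzero scalars `t_a` such that the
vectors `u_a = t_a • v_a + v` are linearly independent, their span `M` satisfies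
`M \ {0} ⊆ A`, and `v` lies in the closure of `M`. -/
theorem stmt19 (V : Type*) [AddCommGroup V] [Module ℝ V] [MetricSpace V]
    [ContinuousAdd V] [ContinuousSMul ℝ V]
    (hinv : ∀ x y z : V, dist (x + z) (y + z) = dist x y)
    (A B : Set V) (hstr : A + B ⊆ A) (hAB : A ∩ B = ∅)
    (v : V) (hv : v ≠ 0) (hB : ∀ c : ℝ, c ≠ 0 → c • v ∈ B)
    (ι : Type*) [Infinite ι] (va : ι → V) (hind : LinearIndependent ℝ va)
    (hA : (Submodule.span ℝ (Set.range va) : Set V) \ {0} ⊆ A) :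
    ∃ t : ι → ℝ, (∀ a, t a ≠ 0) ∧
      LinearIndependent ℝ (fun a => t a • va a + v) ∧
      (Submodule.span ℝ (Set.range (fun a => t a • va a + v)) : Set V) \ {0} ⊆ A ∧
      v ∈ closure (Submodule.span ℝ (Set.range (fun a => t a • va a + v)) : Set V) :=
  stmt19_general V A B hstr hAB v hv hB ι va hind hA
end
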